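/- arXiv:1603.04285 — 11 statements merged into one kernel-verified Lean document; each statement's English description precedes it below -/
import Mathlib

section
/- Let (A,σ) be a difference ring such that const(A,σ) is a field, let β ∈ A, and let A[t] be the S-extension of (A,σ) with σ(t) = t + β. Then const(A[t],σ) = const(A,σ) (i.e., every f ∈ A[t] with σ(f) = f is a constant polynomial whose coefficient lies in const(A,σ)) if and only if there is no g ∈ A with σ(g) = g + β. -/
/-!
An S-extension acts on `A[t]` by `f ↦ (σ f)(t + β)`, a Taylor shift of the coefficientwise image.
If `f` of degree `n + 1` is fixed, comparing the coefficients of `t^(n+1)` and `t^n` shows that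
its leading coefficient `a` is a constant and that its next coefficient `b` satisfies
`b = σ b + (n + 1) a β`. As `(n + 1) a` is a nonzero constant, hence a unit, `g = -b / ((n + 1) a)`
solves `σ g = g + β`. Conversely such a `g` makes `t - g` a nonconstant fixed element.
-/

open Polynomial

namespace Polynomial

theorem coeff_taylor_of_natDegree_le_succ {R : Type*} [Semiring R] {f : R[X]} {n : ℕ}
    (hf : f.natDegree ≤ n + 1) (r : R) :
    (taylor r f).coeff n = f.coeff n + (n + 1) * f.coeff (n + 1) * r := by
  have hdeg : (hasseDeriv n f).natDegree ≤ 1 :=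
    (natDegree_hasseDeriv_le f n).trans (by omega)
  rw [taylor_coeff, eq_X_add_C_of_natDegree_le_one hdeg, hasseDeriv_coeff, hasseDeriv_coeff,
    zero_add, add_comm 1 n, Nat.choose_self, Nat.choose_succ_self_right]
  simp only [eval_add, eval_mul_X, eval_C]
  push_cast
  rw [one_mul, add_comm]

theorem eq_taylor_map_of_map_C_of_map_X {R F G : Type*} [CommSemiring R]
    [FunLike F R[X] R[X]] [RingHomClass F R[X] R[X]] [FunLike G R R] [RingHomClass G R R]
    {φ : F} {σ : G} {β : R} (hC : ∀ a, φ (C a) = C (σ a)) (hX : φ X = X + C β) (p : R[X]) :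
    φ p = taylor β (p.map (σ : R →+* R)) := by
  have : (φ : R[X] →+* R[X]) = (compRingHom (X + C β)).comp (mapRingHom σ) :=
    ringHom_ext (by simp [hC]) (by simp [hX])
  rw [← RingHom.coe_coe φ, this, taylor_apply]
  rfl

end Polynomial

theorem RingHom.map_units_inv_of_map_eq {R : Type*} [Semiring R] (σ : R →+* R) {u : Rˣ}
    (hu : σ u = u) : σ ↑u⁻¹ = ↑u⁻¹ :=
  (Units.inv_eq_of_mul_eq_one_left (by rw [← hu, ← map_mul, u.inv_mul, map_one])).symm

theorem isUnit_natCast_succ_of_algebra_rat {A : Type*} [Ring A] [Algebra ℚ A] (n : ℕ) :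
    IsUnit ((n + 1 : ℕ) : A) := by
  simpa using (IsUnit.mk0 ((n + 1 : ℕ) : ℚ) (by positivity)).map (algebraMap ℚ A)

section SExtension

variable {A : Type*} [CommRing A] {σ : A →+* A} {β : A}

theorem exists_map_eq_add_of_coeff_eq [Algebra ℚ A]
    (hK : ∀ c : A, σ c = c → c ≠ 0 → IsUnit c) {a b : A} (n : ℕ) (ha : a ≠ 0) (hσa : σ a = a)
    (hb : b = σ b + (n + 1) * a * β) : ∃ g : A, σ g = g + β := by
  have hσc : σ (((n + 1 : ℕ) : A) * a) = ((n + 1 : ℕ) : A) * a := by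
    rw [map_mul, map_natCast, hσa]
  have hc0 : ((n + 1 : ℕ) : A) * a ≠ 0 := fun h ↦ ha <|
    (isUnit_natCast_succ_of_algebra_rat n).mul_right_eq_zero.mp h
  obtain ⟨u, hu⟩ := hK _ hσc hc0
  refine ⟨-b * ↑u⁻¹, ?_⟩
  have hσb : σ b = b - u * β := by rw [hu]; push_cast; linear_combination -hb
  rw [map_mul, map_neg, σ.map_units_inv_of_map_eq (hu ▸ hσc), hσb]
  linear_combination β * u.mul_inv

theorem exists_map_eq_add_of_taylor_map_eq [Algebra ℚ A] (hσ : Function.Injective σ)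
    (hK : ∀ c : A, σ c = c → c ≠ 0 → IsUnit c) {f : A[X]} {n : ℕ} (hdeg : f.natDegree = n + 1)
    (hf : taylor β (f.map σ) = f) : ∃ g : A, σ g = g + β := by
  have hdeg' : (f.map σ).natDegree = n + 1 := by rwa [natDegree_map_eq_of_injective hσ]
  have hlead : σ (f.coeff (n + 1)) = f.coeff (n + 1) := by
    conv_rhs => rw [← hf]
    rw [← hdeg', coeff_taylor_natDegree, leadingCoeff, hdeg', coeff_map]
  have hsub : f.coeff n = σ (f.coeff n) + (n + 1) * f.coeff (n + 1) * β := by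
    conv_lhs => rw [← hf]
    rw [coeff_taylor_of_natDegree_le_succ hdeg'.le, coeff_map, coeff_map, hlead]
  refine exists_map_eq_add_of_coeff_eq hK n ?_ hlead hsub
  rw [← hdeg]
  exact leadingCoeff_ne_zero.mpr (ne_zero_of_natDegree_gt (n := 0) (by omega))

end SExtension

/-- Let `(A,σ)` be a difference ring whose ring of constants is a field,
let `β ∈ A`, and let `A[t]` be the S-extension of `(A,σ)` with `σ(t) = t + β`.
Then `const(A[t],σ) = const(A,σ)` iff there is no `g ∈ A` with `σ(g) = g + β`. -/
theorem stmt0 {A : Type*} [CommRing A] [Algebra ℚ A] [Nontrivial A]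
    (σ : A ≃+* A)
    (hK : ∀ c : A, σ c = c → c ≠ 0 → IsUnit c)
    (β : A)
    (σ' : Polynomial A ≃+* Polynomial A)
    (hC : ∀ a : A, σ' (Polynomial.C a) = Polynomial.C (σ a))
    (hX : σ' Polynomial.X = Polynomial.X + Polynomial.C β) :
    (∀ f : Polynomial A, σ' f = f → ∃ c : A, σ c = c ∧ f = Polynomial.C c) ↔
      ¬ ∃ g : A, σ g = g + β := by
  constructor
  · rintro hconst ⟨g, hg⟩
    obtain ⟨c, -, hc⟩ := hconst (X - C g) (by rw [map_sub, hX, hC, hg, C_add]; ring)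
    simpa using congrArg (coeff · 1) hc
  · intro hno f hf
    rcases hdeg : f.natDegree with _ | n
    · obtain ⟨c, rfl⟩ : ∃ c, f = C c := ⟨_, eq_C_of_natDegree_eq_zero hdeg⟩
      exact ⟨c, C_injective (by rw [← hC, hf]), rfl⟩
    · have hshift : taylor β (f.map (σ : A →+* A)) = f :=
        (eq_taylor_map_of_map_C_of_map_X hC hX f).symm.trans hf
      exact (hno (exists_map_eq_add_of_taylor_map_eq σ.injective hK hdeg hshift)).elim
end

section
/- Let (A,σ) be a difference ring, let α be a unit of A, and let A[t,t⁻¹] be the P-extension of (A,σ) with σ(t) = α·t. Then const(A[t,t⁻¹],σ) = const(A,σ) (i.e., every f ∈ A[t,t⁻¹] with σ(f) = f lies in A) if and only if there are no g ∈ A with g ≠ 0 and m ∈ ℤ with m ≠ 0 such that σ(g) = α^m·g. -/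
/-!
Writing `σ'` coefficientwise, `σ'(∑ aₙ Tⁿ) = ∑ αⁿ σ(aₙ) Tⁿ`, so `f` is fixed exactly when
`σ(aₙ) = α⁻ⁿ aₙ` for every `n`. A fixed `f` is therefore constant unless some `aₙ ≠ 0` with
`n ≠ 0`, which is a solution `g = aₙ`, `m = -n`; conversely a solution gives the non-constant fixed
point `g T⁻ᵐ`.
-/

open LaurentPolynomial

namespace LaurentPolynomial

variable {R F : Type*} [CommRing R] [FunLike F R[T;T⁻¹] R[T;T⁻¹]]
  [RingHomClass F R[T;T⁻¹] R[T;T⁻¹]] {σ : R →+* R} {α : Rˣ} {φ : F}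

lemma map_T_of_map_T_one (hT : φ (T 1) = C (α : R) * T 1) (m : ℤ) :
    φ (T m) = C ((α ^ m : Rˣ) : R) * T m := by
  have hT_neg_one : φ (T (-1)) = C ((α⁻¹ : Rˣ) : R) * T (-1) := by
    refine left_inv_eq_right_inv (a := C (α : R) * T 1) ?_ ?_
    · rw [← hT, ← map_mul, ← T_add, neg_add_cancel, T_zero, map_one]
    · rw [mul_mul_mul_comm, ← map_mul, ← T_add, Units.mul_inv, add_neg_cancel, T_zero, map_one,
        one_mul]
  induction m using Int.induction_on with
  | zero => simp [T_zero]
  | succ n ih =>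
    rw [T_add, map_mul, ih, hT, zpow_add_one, Units.val_mul, map_mul]
    ring
  | pred n ih =>
    rw [sub_eq_add_neg, T_add, map_mul, ih, hT_neg_one, zpow_add, zpow_neg_one, Units.val_mul,
      map_mul]
    ring

lemma coeff_map_of_map_C_of_map_T_one (hC : ∀ a, φ (C a) = C (σ a))
    (hT : φ (T 1) = C (α : R) * T 1) (f : R[T;T⁻¹]) (n : ℤ) :
    (φ f).coeff n = ((α ^ n : Rˣ) : R) * σ (f.coeff n) := by
  induction f using LaurentPolynomial.induction_on' with
  | add p q hp hq => simp only [map_add, AddMonoidAlgebra.coeff_add, Finsupp.add_apply, hp, hq,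
      mul_add]
  | C_mul_T k a =>
    rw [map_mul, hC, map_T_of_map_T_one hT, ← mul_assoc, ← map_mul, ← single_eq_C_mul_T,
      ← single_eq_C_mul_T, AddMonoidAlgebra.coeff_single, AddMonoidAlgebra.coeff_single,
      Finsupp.single_apply, Finsupp.single_apply]
    split_ifs with hkn
    · rw [hkn, mul_comm]
    · rw [map_zero, mul_zero]

lemma map_eq_self_iff_of_map_C_of_map_T_one (hC : ∀ a, φ (C a) = C (σ a))
    (hT : φ (T 1) = C (α : R) * T 1) (f : R[T;T⁻¹]) :
    φ f = f ↔ ∀ n, σ (f.coeff n) = ((α ^ (-n) : Rˣ) : R) * f.coeff n := by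
  simp only [LaurentPolynomial.ext_iff, coeff_map_of_map_C_of_map_T_one hC hT, zpow_neg,
    Units.eq_inv_mul_iff_mul_eq]

lemma eq_C_coeff_zero_of_coeff_eq_zero {f : R[T;T⁻¹]} (hf : ∀ n ≠ 0, f.coeff n = 0) :
    f = C (f.coeff 0) := by
  ext n
  rw [C_apply]
  split_ifs with hn
  · rw [hn]
  · exact hf n hn

end LaurentPolynomial

theorem stmt1_general {A : Type*} [CommRing A]
    (σ : A ≃+* A) (α : Aˣ)
    (σ' : LaurentPolynomial A ≃+* LaurentPolynomial A)
    (hC : ∀ a : A, σ' (LaurentPolynomial.C a) = LaurentPolynomial.C (σ a))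
    (hT : σ' (LaurentPolynomial.T 1) =
        LaurentPolynomial.C (α : A) * LaurentPolynomial.T 1) :
    (∀ f : LaurentPolynomial A, σ' f = f →
        ∃ c : A, σ c = c ∧ f = LaurentPolynomial.C c) ↔
      ¬ ∃ (g : A) (m : ℤ), g ≠ 0 ∧ m ≠ 0 ∧ σ g = ((α ^ m : Aˣ) : A) * g := by
  have hfix := map_eq_self_iff_of_map_C_of_map_T_one (σ := (σ : A →+* A)) hC hT
  constructor
  · rintro h ⟨g, m, hg, hm, hσg⟩
    obtain ⟨c, -, hc⟩ := h (.single (-m) g) <| (hfix _).2 fun n => by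
      rw [AddMonoidAlgebra.coeff_single, Finsupp.single_apply]
      split_ifs with hn
      · rw [← hn, neg_neg]
        exact hσg
      · rw [map_zero, mul_zero]
    have hc_coeff := congrArg (AddMonoidAlgebra.coeff · (-m)) hc
    rw [AddMonoidAlgebra.coeff_single, Finsupp.single_eq_same, C_apply,
      if_neg (neg_ne_zero.2 hm)] at hc_coeff
    exact hg hc_coeff
  · intro h f hf
    rw [hfix] at hf
    refine ⟨f.coeff 0, by simpa using hf 0, eq_C_coeff_zero_of_coeff_eq_zero fun n hn => ?_⟩
    by_contra hne
    exact h ⟨_, -n, hne, neg_ne_zero.2 hn, hf n⟩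

/-- Let `(A,σ)` be a difference ring, `α` a unit of `A`, and
`A[t,t⁻¹]` the P-extension with `σ(t) = α·t`. Then `const(A[t,t⁻¹],σ) = const(A,σ)`
iff there are no `g ∈ A \ {0}` and `m ∈ ℤ \ {0}` with `σ(g) = α^m·g`. -/
theorem stmt1 {A : Type*} [CommRing A] [Algebra ℚ A]
    (σ : A ≃+* A) (α : Aˣ)
    (σ' : LaurentPolynomial A ≃+* LaurentPolynomial A)
    (hC : ∀ a : A, σ' (LaurentPolynomial.C a) = LaurentPolynomial.C (σ a))
    (hT : σ' (LaurentPolynomial.T 1) =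
        LaurentPolynomial.C (α : A) * LaurentPolynomial.T 1) :
    (∀ f : LaurentPolynomial A, σ' f = f →
        ∃ c : A, σ c = c ∧ f = LaurentPolynomial.C c) ↔
      ¬ ∃ (g : A) (m : ℤ), g ≠ 0 ∧ m ≠ 0 ∧ σ g = ((α ^ m : Aˣ) : A) * g :=
  stmt1_general σ α σ' hC hT
end

section
/- Let (A,σ) be a difference ring, let λ > 1 be an integer, let α be a unit of A with α^λ = 1, and let A[y] be the A-extension of order λ with σ(y) = α·y. Then const(A[y],σ) = const(A,σ) (i.e., every f ∈ A[y] with σ(f) = f is the image of an element of const(A,σ)) if and only if there are no g ∈ A with g ≠ 0 and integer m with 1 ≤ m ≤ λ−1 such that σ(g) = α^m·g. -/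
/-!
Let `τ = twistedMap σ α` be the lift of `σ` to `A[X]` with `X ↦ α X`; it acts on coefficients by
`aₙ ↦ σ(aₙ) αⁿ` and induces the automorphism of `A[y]`. Every element of `A[y]` is the class
of a unique polynomial of degree `< λ`, and `τ` preserves this bound, so `[r]` is constant iff
`σ(rₙ) αⁿ = rₙ` for all `n`, i.e. `σ(rₙ) = α^(λ-n) rₙ` as `α^λ = 1`. A constant outside `A`
thus yields some `rₙ ≠ 0` with `0 < n < λ`; conversely, `σ g = α^m g` makes `g y^(λ-m)` a
constant outside `A`.
-/

open Polynomial

theorem mul_pow_eq_iff_eq_pow_sub_mul {M : Type*} [CommMonoid M] {α a b : M} {n lam : ℕ}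
    (hα : α ^ lam = 1) (hn : n ≤ lam) : b * α ^ n = a ↔ b = α ^ (lam - n) * a := by
  constructor
  · rintro rfl
    rw [mul_comm, mul_assoc, ← pow_add, Nat.add_sub_cancel' hn, hα, mul_one]
  · rintro rfl
    rw [mul_comm _ a, mul_assoc, ← pow_add, Nat.sub_add_cancel hn, hα, mul_one]

namespace Polynomial

variable {R : Type*} [CommRing R]

section TwistedMap

variable (σ : R →+* R) (α : R)

noncomputable def twistedMap : R[X] →+* R[X] :=
  (compRingHom (C α * X)).comp (mapRingHom σ)

@[simp]
theorem coeff_twistedMap (p : R[X]) (n : ℕ) :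
    (twistedMap σ α p).coeff n = σ (p.coeff n) * α ^ n := by
  simp [twistedMap]

theorem twistedMap_C_mul_X_pow (g : R) (k : ℕ) :
    twistedMap σ α (C g * X ^ k) = C (σ g * α ^ k) * X ^ k := by
  simp [twistedMap, mul_pow, mul_assoc]

theorem degree_twistedMap_le (p : R[X]) : (twistedMap σ α p).degree ≤ p.degree := by
  rw [degree_le_iff_coeff_zero]
  intro n hn
  rw [coeff_twistedMap, coeff_eq_zero_of_degree_lt hn, map_zero, zero_mul]

theorem twistedMap_eq_self_iff (p : R[X]) :
    twistedMap σ α p = p ↔ ∀ n, σ (p.coeff n) * α ^ n = p.coeff n := by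
  simp only [Polynomial.ext_iff, coeff_twistedMap]

theorem apply_mk_eq_mk_twistedMap {I : Ideal R[X]} (τ : R[X] ⧸ I →+* R[X] ⧸ I)
    (hC : ∀ a : R, τ (Ideal.Quotient.mk I (C a)) = Ideal.Quotient.mk I (C (σ a)))
    (hX : τ (Ideal.Quotient.mk I X) = Ideal.Quotient.mk I (C α * X)) (p : R[X]) :
    τ (Ideal.Quotient.mk I p) = Ideal.Quotient.mk I (twistedMap σ α p) := by
  have hcomp : τ.comp (Ideal.Quotient.mk I) = (Ideal.Quotient.mk I).comp (twistedMap σ α) := by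
    ext a
    · simpa [twistedMap] using hC a
    · simpa [twistedMap] using hX
  exact RingHom.congr_fun hcomp p

variable {σ α} {lam : ℕ}

theorem twistedMap_C_mul_X_pow_eq_self (hα : α ^ lam = 1) {g : R} {m : ℕ} (hm : m ≤ lam)
    (hg : σ g = α ^ m * g) : twistedMap σ α (C g * X ^ (lam - m)) = C g * X ^ (lam - m) := by
  rw [twistedMap_C_mul_X_pow, (mul_pow_eq_iff_eq_pow_sub_mul hα (Nat.sub_le lam m)).2]
  rwa [Nat.sub_sub_self hm]

theorem exists_eq_C_of_twistedMap_eq_self (hα : α ^ lam = 1)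
    (hno : ∀ (g : R) (m : ℕ), 0 < m → m < lam → σ g = α ^ m * g → g = 0) {r : R[X]}
    (hr : r.degree < lam) (hfix : twistedMap σ α r = r) : ∃ c, σ c = c ∧ r = C c := by
  have hcoeff := (twistedMap_eq_self_iff σ α r).1 hfix
  have hdeg : r.degree ≤ 0 := by
    refine (degree_le_iff_coeff_zero r 0).2 fun n hn => ?_
    have hn : 0 < n := by exact_mod_cast hn
    rcases lt_or_ge n lam with hnlam | hnlam
    · exact hno _ (lam - n) (by omega) (by omega)
        ((mul_pow_eq_iff_eq_pow_sub_mul hα hnlam.le).1 (hcoeff n))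
    · exact coeff_eq_zero_of_degree_lt (hr.trans_le (by exact_mod_cast hnlam))
  exact ⟨r.coeff 0, by simpa using hcoeff 0, eq_C_of_degree_le_zero hdeg⟩

end TwistedMap

namespace Monic

variable {q : R[X]}

theorem mk_eq_mk_iff_of_degree_lt (hq : q.Monic) {p p' : R[X]} (hp : p.degree < q.degree)
    (hp' : p'.degree < q.degree) :
    Ideal.Quotient.mk (Ideal.span {q}) p = Ideal.Quotient.mk (Ideal.span {q}) p' ↔ p = p' := by
  rw [Ideal.Quotient.eq, Ideal.mem_span_singleton, ← sub_eq_zero]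
  refine ⟨fun hdvd => by_contra fun hne => hq.not_dvd_of_degree_lt hne ?_ hdvd,
    fun h => h ▸ dvd_zero q⟩
  exact (degree_sub_le p p').trans_lt (max_lt hp hp')

theorem exists_mk_eq_of_degree_lt [Nontrivial R] (hq : q.Monic) (x : R[X] ⧸ Ideal.span {q}) :
    ∃ r : R[X], r.degree < q.degree ∧ Ideal.Quotient.mk (Ideal.span {q}) r = x := by
  obtain ⟨p, rfl⟩ := Ideal.Quotient.mk_surjective x
  refine ⟨p %ₘ q, degree_modByMonic_lt p hq, ?_⟩
  rw [Ideal.Quotient.eq, Ideal.mem_span_singleton, modByMonic_eq_sub_mul_div p q,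
    sub_sub_cancel_left]
  exact (dvd_mul_right q _).neg_right

end Monic

end Polynomial

theorem stmt2_general {A : Type*} [CommRing A]
    (σ : A ≃+* A) (lam : ℕ) (hlam : 1 < lam)
    (α : A) (hord : α ^ lam = 1)
    (π : Polynomial A →+*
        (Polynomial A ⧸ Ideal.span {(Polynomial.X : Polynomial A) ^ lam - 1}))
    (hπ : π = Ideal.Quotient.mk (Ideal.span {(Polynomial.X : Polynomial A) ^ lam - 1}))
    (σ' : (Polynomial A ⧸ Ideal.span {(Polynomial.X : Polynomial A) ^ lam - 1}) ≃+*
        (Polynomial A ⧸ Ideal.span {(Polynomial.X : Polynomial A) ^ lam - 1}))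
    (hC : ∀ a : A, σ' (π (Polynomial.C a)) = π (Polynomial.C (σ a)))
    (hY : σ' (π Polynomial.X) = π (Polynomial.C α * Polynomial.X)) :
    (∀ f, σ' f = f → ∃ c : A, σ c = c ∧ f = π (Polynomial.C c)) ↔
      ¬ ∃ (g : A) (m : ℕ), g ≠ 0 ∧ 1 ≤ m ∧ m ≤ lam - 1 ∧ σ g = α ^ m * g := by
  subst hπ
  rcases subsingleton_or_nontrivial A with hA | hA
  · refine iff_of_true (fun f _ => ⟨0, Subsingleton.elim _ _, ?_⟩) fun ⟨g, _, hg, _⟩ =>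
      hg (Subsingleton.elim _ _)
    obtain ⟨p, rfl⟩ := Ideal.Quotient.mk_surjective f
    rw [Subsingleton.elim p (C 0)]
  have hq : (X ^ lam - 1 : A[X]).Monic := by simpa using monic_X_pow_sub_C (1 : A) (by omega)
  have hqdeg : (X ^ lam - 1 : A[X]).degree = lam := by
    simpa using degree_X_pow_sub_C (R := A) (by omega) 1
  have hσ' (p : A[X]) :
      σ' (Ideal.Quotient.mk _ p) = Ideal.Quotient.mk _ (twistedMap (σ : A →+* A) α p) :=
    apply_mk_eq_mk_twistedMap (σ : A →+* A) α σ'.toRingHom hC hY p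
  constructor
  · rintro hconst ⟨g, m, hg, hm1, hmlam, hσg⟩
    obtain ⟨c, -, hc⟩ := hconst _ <| by
      rw [hσ', twistedMap_C_mul_X_pow_eq_self hord (by omega) hσg]
    have hk : (C g * X ^ (lam - m)).degree < (X ^ lam - 1 : A[X]).degree :=
      (degree_C_mul_X_pow_le _ _).trans_lt <| by
        rw [hqdeg]; exact_mod_cast (by omega : lam - m < lam)
    have hc0 : (C c).degree < (X ^ lam - 1 : A[X]).degree :=
      degree_C_le.trans_lt (by rw [hqdeg]; exact_mod_cast (by omega : 0 < lam))
    have hgc := congrArg (coeff · (lam - m)) ((hq.mk_eq_mk_iff_of_degree_lt hk hc0).1 hc)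
    rw [coeff_C_mul_X_pow, if_pos rfl, coeff_C, if_neg (by omega)] at hgc
    exact hg hgc
  · intro hno f hf
    obtain ⟨r, hr, rfl⟩ := hq.exists_mk_eq_of_degree_lt f
    have hfix := (hq.mk_eq_mk_iff_of_degree_lt ((degree_twistedMap_le _ _ r).trans_lt hr) hr).1
      (hσ' r ▸ hf)
    obtain ⟨c, hσc, rfl⟩ := exists_eq_C_of_twistedMap_eq_self hord
      (fun g m hm hml hσg => by_contra fun hg => hno ⟨g, m, hg, hm, by omega, hσg⟩)
      (hqdeg ▸ hr) hfix
    exact ⟨c, hσc, rfl⟩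

/-- Let `(A,σ)` be a difference ring, `λ > 1`, `α` a unit of `A` with
`α^λ = 1`, and `A[y] = A[z]/⟨z^λ - 1⟩` the A-extension of order `λ` with `σ(y) = α·y`.
Then `const(A[y],σ) = const(A,σ)` iff there are no `g ∈ A \ {0}` and `1 ≤ m ≤ λ−1`
with `σ(g) = α^m·g`. -/
theorem stmt2 {A : Type*} [CommRing A] [Algebra ℚ A]
    (σ : A ≃+* A) (lam : ℕ) (hlam : 1 < lam)
    (α : A) (hαu : IsUnit α) (hord : α ^ lam = 1)
    (π : Polynomial A →+*
        (Polynomial A ⧸ Ideal.span {(Polynomial.X : Polynomial A) ^ lam - 1}))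
    (hπ : π = Ideal.Quotient.mk (Ideal.span {(Polynomial.X : Polynomial A) ^ lam - 1}))
    (σ' : (Polynomial A ⧸ Ideal.span {(Polynomial.X : Polynomial A) ^ lam - 1}) ≃+*
        (Polynomial A ⧸ Ideal.span {(Polynomial.X : Polynomial A) ^ lam - 1}))
    (hC : ∀ a : A, σ' (π (Polynomial.C a)) = π (Polynomial.C (σ a)))
    (hY : σ' (π Polynomial.X) = π (Polynomial.C α * Polynomial.X)) :
    (∀ f, σ' f = f → ∃ c : A, σ c = c ∧ f = π (Polynomial.C c)) ↔
      ¬ ∃ (g : A) (m : ℕ), g ≠ 0 ∧ 1 ≤ m ∧ m ≤ lam - 1 ∧ σ g = α ^ m * g :=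
  stmt2_general σ lam hlam α hord π hπ σ' hC hY
end

section
/- Let (F,σ) be a difference field of characteristic 0 and let β ∈ F. Let F[t] be the S-extension of (F,σ) with σ(t) = t + β, and let F(t) be the field of rational functions in t over F (the fraction field of F[t]) equipped with the unique field automorphism extending σ with σ(t) = t + β. Then const(F[t],σ) = const(F,σ) if and only if const(F(t),σ) = const(F,σ). -/
open Polynomial

private lemma sigmap_eq {F : Type*} [Field F]
    (σ : F ≃+* F) (β : F)
    (σp : Polynomial F ≃+* Polynomial F)
    (hpC : ∀ a : F, σp (Polynomial.C a) = Polynomial.C (σ a))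
    (hpX : σp Polynomial.X = Polynomial.X + Polynomial.C β)
    (f : Polynomial F) :
    σp f = (f.map (σ : F →+* F)).comp (Polynomial.X + Polynomial.C β) := by
  induction f using Polynomial.induction_on with
  | C a => simp [hpC]
  | add p q hp hq => simp [map_add, hp, hq]
  | monomial n a h =>
      rw [pow_succ, ← mul_assoc, map_mul, h, hpX]
      simp [Polynomial.map_mul, Polynomial.mul_comp]

private lemma sigmap_natDegree {F : Type*} [Field F]
    (σ : F ≃+* F) (β : F)
    (σp : Polynomial F ≃+* Polynomial F)
    (hpC : ∀ a : F, σp (Polynomial.C a) = Polynomial.C (σ a))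
    (hpX : σp Polynomial.X = Polynomial.X + Polynomial.C β)
    (f : Polynomial F) : (σp f).natDegree = f.natDegree := by
  rw [sigmap_eq σ β σp hpC hpX, Polynomial.natDegree_comp]
  simp [Polynomial.natDegree_map]

private lemma sigmap_monic {F : Type*} [Field F]
    (σ : F ≃+* F) (β : F)
    (σp : Polynomial F ≃+* Polynomial F)
    (hpC : ∀ a : F, σp (Polynomial.C a) = Polynomial.C (σ a))
    (hpX : σp Polynomial.X = Polynomial.X + Polynomial.C β)
    {f : Polynomial F} (hf : f.Monic) : (σp f).Monic := by
  rw [sigmap_eq σ β σp hpC hpX]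
  have h1 : (Polynomial.X + Polynomial.C β : Polynomial F).Monic := by
    simpa using Polynomial.monic_X_add_C β
  exact ((hf.map (σ : F →+* F)).comp h1 (by simp))

private lemma sigmar_algebraMap {F : Type*} [Field F]
    (σ : F ≃+* F) (β : F)
    (σp : Polynomial F ≃+* Polynomial F)
    (hpC : ∀ a : F, σp (Polynomial.C a) = Polynomial.C (σ a))
    (hpX : σp Polynomial.X = Polynomial.X + Polynomial.C β)
    (σr : RatFunc F ≃+* RatFunc F)
    (hrC : ∀ a : F, σr (RatFunc.C a) = RatFunc.C (σ a))
    (hrX : σr RatFunc.X = RatFunc.X + RatFunc.C β)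
    (f : Polynomial F) :
    σr (algebraMap (Polynomial F) (RatFunc F) f)
      = algebraMap (Polynomial F) (RatFunc F) (σp f) := by
  have hX' : σr (algebraMap (Polynomial F) (RatFunc F) Polynomial.X)
      = algebraMap (Polynomial F) (RatFunc F) (σp Polynomial.X) := by
    simp [RatFunc.algebraMap_X, hrX, hpX, map_add, RatFunc.algebraMap_C]
  induction f using Polynomial.induction_on with
  | C a => simp [hpC, hrC, RatFunc.algebraMap_C]
  | add p q hp hq => simp [map_add, hp, hq]
  | monomial n a h =>
      rw [pow_succ, ← mul_assoc, map_mul, map_mul, h, hX', ← map_mul, ← map_mul]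

/-- Let `(F,σ)` be a difference field of characteristic 0 and `β ∈ F`.
Let `F[t]` be the S-extension with `σ(t) = t + β` and `F(t)` the rational function field
with the unique extension of `σ` with `σ(t) = t + β`. Then
`const(F[t],σ) = const(F,σ)` iff `const(F(t),σ) = const(F,σ)`. -/
theorem stmt3 {F : Type*} [Field F] [CharZero F]
    (σ : F ≃+* F) (β : F)
    (σp : Polynomial F ≃+* Polynomial F)
    (hpC : ∀ a : F, σp (Polynomial.C a) = Polynomial.C (σ a))
    (hpX : σp Polynomial.X = Polynomial.X + Polynomial.C β)
    (σr : RatFunc F ≃+* RatFunc F)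
    (hrC : ∀ a : F, σr (RatFunc.C a) = RatFunc.C (σ a))
    (hrX : σr RatFunc.X = RatFunc.X + RatFunc.C β) :
    (∀ f : Polynomial F, σp f = f → ∃ c : F, σ c = c ∧ f = Polynomial.C c) ↔
      (∀ f : RatFunc F, σr f = f → ∃ c : F, σ c = c ∧ f = RatFunc.C c) := by
  have key := sigmar_algebraMap σ β σp hpC hpX σr hrC hrX
  constructor
  · intro H f hf
    set p := f.num with hp
    set q := f.denom with hq
    have hq0 : q ≠ 0 := f.denom_ne_zero
    have hfd : algebraMap (Polynomial F) (RatFunc F) p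
        / algebraMap (Polynomial F) (RatFunc F) q = f := f.num_div_denom
    -- σp q is a multiple of q of the same degree, both monic, hence σp q = q
    have hσq0 : σp q ≠ 0 := by
      simpa using (map_ne_zero_iff σp σp.injective).mpr hq0
    have hdvd : q ∣ σp q := by
      rw [hq]
      rw [RatFunc.denom_dvd hσq0]
      refine ⟨σp p, ?_⟩
      rw [← key, ← key, ← map_div₀, hfd, hf]
    obtain ⟨r, hr⟩ := hdvd
    have hr0 : r ≠ 0 := by
      rintro rfl; rw [mul_zero] at hr; exact hσq0 hr
    have hdeg : r.natDegree = 0 := by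
      have := sigmap_natDegree σ β σp hpC hpX q
      rw [hr, Polynomial.natDegree_mul hq0 hr0] at this
      omega
    have hqm : q.Monic := f.monic_denom
    have hσqm : (σp q).Monic := sigmap_monic σ β σp hpC hpX hqm
    have hr1 : r = 1 := by
      have h1 : (σp q).leadingCoeff = q.leadingCoeff * r.leadingCoeff := by
        rw [hr, Polynomial.leadingCoeff_mul]
      rw [hσqm.leadingCoeff, hqm.leadingCoeff, one_mul] at h1
      have : r = Polynomial.C r.leadingCoeff := by
        rw [Polynomial.leadingCoeff]
        exact (Polynomial.eq_C_of_natDegree_eq_zero hdeg).trans (by rw [hdeg])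
      rw [this, ← h1, Polynomial.C_1]
    have hqq : σp q = q := by rw [hr, hr1, mul_one]
    -- now σp p = p
    have hpp : σp p = p := by
      apply RatFunc.algebraMap_injective F
      have h2 : algebraMap (Polynomial F) (RatFunc F) p
          = f * algebraMap (Polynomial F) (RatFunc F) q := by
        rw [← hfd, div_mul_cancel₀]
        exact RatFunc.algebraMap_ne_zero hq0
      calc algebraMap (Polynomial F) (RatFunc F) (σp p)
          = σr (algebraMap (Polynomial F) (RatFunc F) p) := (key p).symm
        _ = σr f * σr (algebraMap (Polynomial F) (RatFunc F) q) := by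
            rw [← map_mul, ← h2]
        _ = f * algebraMap (Polynomial F) (RatFunc F) q := by
            rw [hf, key, hqq]
        _ = algebraMap (Polynomial F) (RatFunc F) p := h2.symm
    obtain ⟨a, ha, hpa⟩ := H p hpp
    obtain ⟨b, hb, hqb⟩ := H q hqq
    have hb0 : b ≠ 0 := by rintro rfl; simp [hqb] at hq0
    refine ⟨a / b, ?_, ?_⟩
    · rw [map_div₀, ha, hb]
    · rw [← hfd, hpa, hqb, RatFunc.algebraMap_C, RatFunc.algebraMap_C, ← map_div₀]
  · intro H f hf
    have : σr (algebraMap (Polynomial F) (RatFunc F) f)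
        = algebraMap (Polynomial F) (RatFunc F) f := by rw [key, hf]
    obtain ⟨c, hc, hfc⟩ := H _ this
    refine ⟨c, hc, ?_⟩
    apply RatFunc.algebraMap_injective F
    rw [hfc, RatFunc.algebraMap_C]
end

section
/- Let (F,σ) be a difference field of characteristic 0 and let α ∈ F with α ≠ 0. Let F[t,t⁻¹] be the P-extension of (F,σ) with σ(t) = α·t, and let F(t) be the field of rational functions in t over F equipped with the unique field automorphism extending σ with σ(t) = α·t. Then const(F[t,t⁻¹],σ) = const(F,σ) if and only if const(F(t),σ) = const(F,σ). -/
/-!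
Both conditions are equivalent to: `σ a * α ^ n = a` with `a ≠ 0` forces `n = 0`.
If it fails, `C a * T n` is a nonconstant invariant Laurent polynomial. If it holds and `f = p / q`
is an invariant reduced fraction, then `p` and `q` are semi-invariant with a common factor `u` for
the extension of `σ` to `F[t]`, so nonzero coefficients `p_k`, `q_j` satisfy
`σ (p_k / q_j) * α ^ (k - j) = p_k / q_j`, which forces `k = j`: `p` and `q` are monomials of the
same degree and `f` is a constant. Finally `F[t, t⁻¹]` embeds equivariantly into `F(t)`, so
invariant Laurent polynomials are invariant rational functions.
-/

lemma map_div_mul_zpow_eq {F : Type*} [Field F] {σ : F →+* F} {α u a b : F} {k j : ℕ}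
    (hα : α ≠ 0) (hb : b ≠ 0) (ha : σ a * α ^ k = u * a) (hb' : σ b * α ^ j = u * b) :
    σ (a / b) * α ^ ((k : ℤ) - j) = a / b := by
  have : σ b ≠ 0 := map_ne_zero_iff _ σ.injective |>.mpr hb
  rw [map_div₀, zpow_sub₀ hα, zpow_natCast, zpow_natCast]
  field_simp
  linear_combination b * ha - a * hb'

namespace Polynomial

variable {F : Type*} [Field F]

/-- The extension of `σ` to `F[t]` with `t ↦ α t`. -/
noncomputable def twist (σ : F →+* F) (α : F) : F[X] →+* F[X] :=
  (compRingHom (C α * X)).comp (mapRingHom σ)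

variable {σ : F →+* F} {α : F}

@[simp]
lemma coeff_twist (p : F[X]) (n : ℕ) : (twist σ α p).coeff n = σ (p.coeff n) * α ^ n := by
  simp [twist]

lemma twist_injective (hα : α ≠ 0) : Function.Injective (twist σ α) := by
  refine (injective_iff_map_eq_zero _).2 fun p hp => ext fun n => ?_
  simpa [hα] using congrArg (coeff · n) hp

lemma coeff_eq_of_twist_eq_C_mul {p : F[X]} {u : F} (h : twist σ α p = C u * p) (n : ℕ) :
    σ (p.coeff n) * α ^ n = u * p.coeff n := by
  simpa using congrArg (coeff · n) h

lemma eq_of_mem_support_of_twist_eq_C_mul (hα : α ≠ 0)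
    (hσα : ∀ (a : F) (n : ℤ), a ≠ 0 → σ a * α ^ n = a → n = 0)
    {p q : F[X]} {u : F} (hp : twist σ α p = C u * p) (hq : twist σ α q = C u * q)
    {k j : ℕ} (hk : k ∈ p.support) (hj : j ∈ q.support) : k = j := by
  rw [mem_support_iff] at hk hj
  have := hσα _ _ (div_ne_zero hk hj) <| map_div_mul_zpow_eq hα hj
    (coeff_eq_of_twist_eq_C_mul hp k) (coeff_eq_of_twist_eq_C_mul hq j)
  omega

end Polynomial

namespace RatFunc

open Polynomial

variable {F : Type*} [Field F] {σ : F →+* F} {α : F} {σr : RatFunc F →+* RatFunc F}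

lemma map_algebraMap_eq_algebraMap_twist (hrC : ∀ a : F, σr (C a) = C (σ a))
    (hrX : σr X = C α * X) (p : F[X]) :
    σr (algebraMap F[X] (RatFunc F) p) = algebraMap F[X] (RatFunc F) (twist σ α p) := by
  show (σr.comp (algebraMap _ _)) p = ((algebraMap _ _).comp (twist σ α)) p
  congr 1
  refine Polynomial.ringHom_ext (fun a => ?_) ?_ <;> simp [twist, hrC, hrX]

lemma exists_twist_num_eq_and_twist_denom_eq (hα : α ≠ 0)
    (hrC : ∀ a : F, σr (C a) = C (σ a)) (hrX : σr X = C α * X) {f : RatFunc F}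
    (hf : σr f = f) :
    ∃ u : F, twist σ α f.num = Polynomial.C u * f.num ∧
      twist σ α f.denom = Polynomial.C u * f.denom := by
  set p := f.num
  set q := f.denom
  have hq : q ≠ 0 := f.denom_ne_zero
  have cop : IsCoprime p q := f.isCoprime_num_denom
  have hq' : twist σ α q ≠ 0 := (map_ne_zero_iff _ (twist_injective hα)).mpr hq
  have cross : twist σ α p * q = p * twist σ α q := by
    refine algebraMap_injective F ?_
    rw [map_mul, map_mul, ← div_eq_div_iff (algebraMap_ne_zero hq') (algebraMap_ne_zero hq),
      ← map_algebraMap_eq_algebraMap_twist hrC hrX,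
      ← map_algebraMap_eq_algebraMap_twist hrC hrX, ← map_div₀, f.num_div_denom, hf]
  have hdvd : q ∣ twist σ α q :=
    cop.symm.dvd_of_dvd_mul_right ⟨twist σ α p, by linear_combination -cross⟩
  have hdvd' : twist σ α q ∣ q :=
    (cop.map (twist σ α)).symm.dvd_of_dvd_mul_right ⟨p, by linear_combination cross⟩
  obtain ⟨v, hv⟩ := associated_of_dvd_dvd hdvd hdvd'
  obtain ⟨u, -, hu⟩ := Polynomial.isUnit_iff.mp v.isUnit
  have hqu : twist σ α q = Polynomial.C u * q := by rw [← hv, ← hu, mul_comm]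
  refine ⟨u, mul_right_cancel₀ hq ?_, hqu⟩
  rw [cross, hqu]
  ring

lemma exists_eq_C_of_map_eq_self (hα : α ≠ 0)
    (hσα : ∀ (a : F) (n : ℤ), a ≠ 0 → σ a * α ^ n = a → n = 0)
    (hrC : ∀ a : F, σr (C a) = C (σ a)) (hrX : σr X = C α * X) {f : RatFunc F}
    (hf : σr f = f) : ∃ c : F, σ c = c ∧ f = C c := by
  rcases eq_or_ne f 0 with rfl | hf0
  · exact ⟨0, map_zero σ, C.map_zero.symm⟩
  obtain ⟨u, hp, hq⟩ := exists_twist_num_eq_and_twist_denom_eq hα hrC hrX hf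
  set p := f.num
  set q := f.denom
  have hp0 : p ≠ 0 := num_ne_zero hf0
  have hq0 : q ≠ 0 := f.denom_ne_zero
  have hp1 : p.support.card ≤ 1 := Finset.card_le_one.2 fun k hk j hj =>
    eq_of_mem_support_of_twist_eq_C_mul hα hσα hp hp hk hj
  have hq1 : q.support.card ≤ 1 := Finset.card_le_one.2 fun k hk j hj =>
    eq_of_mem_support_of_twist_eq_C_mul hα hσα hq hq hk hj
  have hdeg : p.natDegree = q.natDegree := eq_of_mem_support_of_twist_eq_C_mul hα hσα hp hq
    (natDegree_mem_support_of_nonzero hp0) (natDegree_mem_support_of_nonzero hq0)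
  refine ⟨p.leadingCoeff / q.leadingCoeff, ?_, ?_⟩
  · have h := map_div_mul_zpow_eq (σ := σ) hα (leadingCoeff_ne_zero.2 hq0)
      (coeff_eq_of_twist_eq_C_mul hp p.natDegree) (coeff_eq_of_twist_eq_C_mul hq q.natDegree)
    rwa [show (p.natDegree : ℤ) - q.natDegree = 0 by omega, zpow_zero, mul_one] at h
  · have hf' : f = algebraMap _ _ p / algebraMap _ _ q := f.num_div_denom.symm
    conv_lhs => rw [hf', ← C_mul_X_pow_eq_self hp1, ← C_mul_X_pow_eq_self hq1, hdeg]
    simp only [map_mul, map_pow, algebraMap_C, algebraMap_X]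
    rw [mul_div_mul_right _ _ (pow_ne_zero _ X_ne_zero), map_div₀]

end RatFunc

namespace LaurentPolynomial

open scoped Polynomial
open Polynomial (toLaurent)

lemma ringHom_ext {R S : Type*} [CommSemiring R] [Semiring S] {φ ψ : R[T;T⁻¹] →+* S}
    (hC : ∀ a, φ (C a) = ψ (C a)) (hT : φ (T 1) = ψ (T 1)) : φ = ψ := by
  refine IsLocalization.ringHom_ext (Submonoid.powers (Polynomial.X : R[X])) <|
    Polynomial.ringHom_ext (fun a => ?_) ?_
  · simpa [algebraMap_eq_toLaurent] using hC a
  · simpa [algebraMap_eq_toLaurent] using hT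

lemma eq_zero_of_C_mul_T_eq_C {R : Type*} [Semiring R] {a c : R} {n : ℤ} (ha : a ≠ 0)
    (h : C a * T n = C c) : n = 0 := by
  by_contra hn
  exact ha <| by
    simpa [← single_eq_C_mul_T, hn] using congrArg (fun f : R[T;T⁻¹] => f.coeff n) h

variable {F : Type*} [Field F]

noncomputable def toRatFunc : F[T;T⁻¹] →+* RatFunc F :=
  eval₂ RatFunc.C (Units.mk0 RatFunc.X RatFunc.X_ne_zero)

@[simp]
lemma toRatFunc_C (a : F) : toRatFunc (C a) = RatFunc.C a := eval₂_C _ _ _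

@[simp]
lemma toRatFunc_T (n : ℤ) : toRatFunc (T n : F[T;T⁻¹]) = RatFunc.X ^ n := by
  simp [toRatFunc]

lemma toRatFunc_toLaurent (p : F[X]) :
    toRatFunc (toLaurent p) = algebraMap F[X] (RatFunc F) p := by
  show (toRatFunc.comp toLaurent) p = _
  congr 1
  refine Polynomial.ringHom_ext (fun a => ?_) ?_ <;> simp

lemma toRatFunc_injective : Function.Injective (toRatFunc : F[T;T⁻¹] → RatFunc F) := by
  refine (injective_iff_map_eq_zero _).2 fun f hf => ?_
  obtain ⟨n, p, hp⟩ := exists_T_pow f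
  have : p = 0 := by
    rw [← (RatFunc.algebraMap_injective F).eq_iff, map_zero, ← toRatFunc_toLaurent, hp,
      map_mul, hf, zero_mul]
  rwa [this, map_zero, eq_comm, (isUnit_T _).mul_left_eq_zero] at hp

variable {σ : F →+* F} {α : F} {σl : F[T;T⁻¹] →+* F[T;T⁻¹]}
  {σr : RatFunc F →+* RatFunc F}

lemma toRatFunc_map (hlC : ∀ a, σl (C a) = C (σ a)) (hlT : σl (T 1) = C α * T 1)
    (hrC : ∀ a, σr (RatFunc.C a) = RatFunc.C (σ a))
    (hrX : σr RatFunc.X = RatFunc.C α * RatFunc.X) (f : F[T;T⁻¹]) :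
    toRatFunc (σl f) = σr (toRatFunc f) := by
  show (toRatFunc.comp σl) f = (σr.comp toRatFunc) f
  congr 1
  refine ringHom_ext (fun a => ?_) ?_ <;> simp [hlC, hrC, hlT, hrX]

lemma map_C_mul_T (hmap : ∀ f, toRatFunc (σl f) = σr (toRatFunc f))
    (hrC : ∀ a, σr (RatFunc.C a) = RatFunc.C (σ a))
    (hrX : σr RatFunc.X = RatFunc.C α * RatFunc.X) (a : F) (n : ℤ) :
    σl (C a * T n) = C (σ a * α ^ n) * T n := by
  refine toRatFunc_injective ?_
  simp [hmap, hrC, hrX, map_zpow₀, mul_zpow, mul_assoc]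

end LaurentPolynomial

theorem stmt4_general {F : Type*} [Field F]
    (σ : F ≃+* F) (α : F) (hα : α ≠ 0)
    (σl : LaurentPolynomial F ≃+* LaurentPolynomial F)
    (hlC : ∀ a : F, σl (LaurentPolynomial.C a) = LaurentPolynomial.C (σ a))
    (hlT : σl (LaurentPolynomial.T 1) =
        LaurentPolynomial.C α * LaurentPolynomial.T 1)
    (σr : RatFunc F ≃+* RatFunc F)
    (hrC : ∀ a : F, σr (RatFunc.C a) = RatFunc.C (σ a))
    (hrX : σr RatFunc.X = RatFunc.C α * RatFunc.X) :
    (∀ f : LaurentPolynomial F, σl f = f →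
        ∃ c : F, σ c = c ∧ f = LaurentPolynomial.C c) ↔
      (∀ f : RatFunc F, σr f = f → ∃ c : F, σ c = c ∧ f = RatFunc.C c) := by
  have hmap : ∀ f, (σl f).toRatFunc = σr f.toRatFunc :=
    LaurentPolynomial.toRatFunc_map (σ := σ.toRingHom) (σl := σl.toRingHom)
      (σr := σr.toRingHom) hlC hlT hrC hrX
  have hσl : ∀ a n, σl (.C a * .T n) = .C (σ a * α ^ n) * .T n :=
    LaurentPolynomial.map_C_mul_T (σ := σ.toRingHom) (σl := σl.toRingHom)
      (σr := σr.toRingHom) hmap hrC hrX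
  constructor
  · intro hl f
    refine RatFunc.exists_eq_C_of_map_eq_self (σ := σ.toRingHom) (σr := σr.toRingHom) hα
      (fun a n ha (h : σ a * α ^ n = a) => ?_) hrC hrX
    obtain ⟨c, -, hc⟩ := hl (.C a * .T n) (by rw [hσl, h])
    exact LaurentPolynomial.eq_zero_of_C_mul_T_eq_C ha hc
  · intro hr f hf
    obtain ⟨c, hc, hfc⟩ := hr f.toRatFunc (by rw [← hmap, hf])
    exact ⟨c, hc, LaurentPolynomial.toRatFunc_injective <| hfc.trans
      (LaurentPolynomial.toRatFunc_C c).symm⟩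

/-- Let `(F,σ)` be a difference field of characteristic 0 and `α ∈ F*`.
Let `F[t,t⁻¹]` be the P-extension with `σ(t) = α·t` and `F(t)` the rational function
field with the unique extension of `σ` with `σ(t) = α·t`. Then
`const(F[t,t⁻¹],σ) = const(F,σ)` iff `const(F(t),σ) = const(F,σ)`. -/
theorem stmt4 {F : Type*} [Field F] [CharZero F]
    (σ : F ≃+* F) (α : F) (hα : α ≠ 0)
    (σl : LaurentPolynomial F ≃+* LaurentPolynomial F)
    (hlC : ∀ a : F, σl (LaurentPolynomial.C a) = LaurentPolynomial.C (σ a))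
    (hlT : σl (LaurentPolynomial.T 1) =
        LaurentPolynomial.C α * LaurentPolynomial.T 1)
    (σr : RatFunc F ≃+* RatFunc F)
    (hrC : ∀ a : F, σr (RatFunc.C a) = RatFunc.C (σ a))
    (hrX : σr RatFunc.X = RatFunc.C α * RatFunc.X) :
    (∀ f : LaurentPolynomial F, σl f = f →
        ∃ c : F, σ c = c ∧ f = LaurentPolynomial.C c) ↔
      (∀ f : RatFunc F, σr f = f → ∃ c : F, σ c = c ∧ f = RatFunc.C c) :=
  stmt4_general σ α hα σl hlC hlT σr hrC hrX
end

section
/- Let (F,σ) be a constant-stable difference field of characteristic 0, let e ≥ 1, and let λ_1,…,λ_e be pairwise coprime integers > 1. Let α_1,…,α_e ∈ const(F,σ) be such that α_i is a primitive λ_i-th root of unity for each i. Let E := F[z_1,…,z_e]/⟨z_1^{λ_1}−1,…,z_e^{λ_e}−1⟩ with t_i the image of z_i, equipped with the unique ring automorphism extending σ with σ(t_i) = α_i·t_i; and with λ := λ_1⋯λ_e, let F[t] := F[z]/⟨z^λ−1⟩ with t the image of z, equipped with the unique ring automorphism extending σ with σ(t) = (α_1⋯α_e)·t. Then: (1) α_1⋯α_e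 is a primitive λ-th root of unity in F and const(F[t],σ) = const(F,σ); (2) there exist natural numbers r_1,…,r_e and a ring isomorphism τ : E → F[t] such that τ fixes F elementwise, τ(t_i) = t^{r_i} for all i, and τ(σ(x)) = σ(τ(x)) for all x ∈ E; (3) const(E,σ) = const(F,σ). -/
/-!
Write `λ = λ_1⋯λ_e`, `α = α_1⋯α_e`, and let `r_i ≡ 1 (mod λ_i)`, `r_i ≡ 0 (mod λ_j)` for
`j ≠ i` be the Chinese-remainder exponents. If `x_j ^ λ_j = 1` for all `j`, then
`(x_1⋯x_e) ^ r_i = x_i`; moreover `∑ r_i ≡ 1 (mod λ)`. Hence `t_i ↦ t ^ r_i` and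
`t ↦ t_1⋯t_e` are mutually inverse, and `α ^ r_i = α_i` makes this isomorphism commute with `σ`.

A `σ`-constant of `F[t]` has a representative `∑_{n < λ} c_n t^n`, and invariance reads
`σ(c_n) α^n = c_n`. Iterating `λ` times gives `σ^λ(c_n) = c_n`, so constant-stability makes
`c_n` a constant, and then `c_n = 0` unless `α^n = 1`, that is unless `n = 0`. The constants
of `E` are transported along the isomorphism.
-/

open Polynomial
open scoped Function

theorem IsPrimitiveRoot.finset_prod {ι M : Type*} [CommMonoid M] {ζ : ι → M} {k : ι → ℕ}
    {s : Finset ι} (hζ : ∀ i ∈ s, IsPrimitiveRoot (ζ i) (k i))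
    (hk : (s : Set ι).Pairwise (Nat.Coprime on k)) :
    IsPrimitiveRoot (∏ i ∈ s, ζ i) (∏ i ∈ s, k i) := by
  classical
  induction s using Finset.induction_on with
  | empty => simp
  | insert a s ha ih =>
    simp only [Finset.coe_insert, Set.pairwise_insert, Finset.mem_insert, forall_eq_or_imp]
      at hζ hk
    have hs := ih hζ.2 hk.1
    have hcop : (orderOf (ζ a)).Coprime (orderOf (∏ i ∈ s, ζ i)) := by
      rw [← hζ.1.eq_orderOf, ← hs.eq_orderOf]
      exact Nat.Coprime.prod_right fun j hj => (hk.2 j hj (ne_of_mem_of_not_mem hj ha).symm).1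
    rw [Finset.prod_insert ha, Finset.prod_insert ha, IsPrimitiveRoot.iff_orderOf,
      (Commute.all _ _).orderOf_mul_eq_mul_orderOf_of_coprime hcop, ← hζ.1.eq_orderOf,
      ← hs.eq_orderOf]

theorem pow_eq_pow_of_natCast_eq {M : Type*} [Monoid M] {x : M} {k a b : ℕ} (hx : x ^ k = 1)
    (h : (a : ZMod k) = b) : x ^ a = x ^ b :=
  pow_eq_pow_of_modEq ((ZMod.natCast_eq_natCast_iff a b k).1 h) hx

theorem ZMod.natCast_eq_natCast_iff_forall {ι : Type*} [Fintype ι] {lam : ι → ℕ}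
    (hcop : Pairwise (Nat.Coprime on lam)) {a b : ℕ} :
    (a : ZMod (∏ j, lam j)) = b ↔ ∀ j, (a : ZMod (lam j)) = b := by
  rw [← (prodEquivPi lam hcop).injective.eq_iff, funext_iff]
  simp [prodEquivPi_apply, map_natCast]

theorem Ideal.Quotient.mk_pow_eq_one {A : Type*} [CommRing A] {I : Ideal A} {x : A} {n : ℕ}
    (h : x ^ n - 1 ∈ I) : Ideal.Quotient.mk I x ^ n = 1 := by
  rw [← map_pow, ← map_one (Ideal.Quotient.mk I)]
  exact Ideal.Quotient.eq.2 h

section CRT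

variable {ι : Type*} [Fintype ι] [DecidableEq ι] (lam : ι → ℕ)
  (hcop : Pairwise (Nat.Coprime on lam))

noncomputable def crtExponent (i : ι) : ℕ :=
  ((ZMod.prodEquivPi lam hcop).symm (Pi.single i 1)).val

variable [NeZero (∏ j, lam j)]

theorem natCast_crtExponent (i j : ι) :
    (crtExponent lam hcop i : ZMod (lam j)) = (Pi.single i 1 : ∀ j, ZMod (lam j)) j := by
  have := congrArg (ZMod.castHom (Finset.dvd_prod_of_mem lam (Finset.mem_univ j)) (ZMod (lam j)))
    (ZMod.natCast_zmod_val ((ZMod.prodEquivPi lam hcop).symm (Pi.single i 1)))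
  rwa [map_natCast, ← ZMod.prodEquivPi_apply lam hcop, RingEquiv.apply_symm_apply] at this

theorem natCast_sum_crtExponent :
    ((∑ i, crtExponent lam hcop i : ℕ) : ZMod (∏ j, lam j)) = (1 : ℕ) := by
  rw [ZMod.natCast_eq_natCast_iff_forall hcop]
  intro j
  simp [natCast_crtExponent]

theorem natCast_crtExponent_mul_self (i : ι) :
    ((crtExponent lam hcop i * lam i : ℕ) : ZMod (∏ j, lam j)) = (0 : ℕ) := by
  rw [ZMod.natCast_eq_natCast_iff_forall hcop]
  intro j
  rcases eq_or_ne j i with rfl | hji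
  · simp
  · simp [natCast_crtExponent, hji]

theorem prod_pow_crtExponent {M : Type*} [CommMonoid M] {x : ι → M}
    (hx : ∀ j, x j ^ lam j = 1) (i : ι) : (∏ j, x j) ^ crtExponent lam hcop i = x i := by
  rw [← Finset.prod_pow, Finset.prod_eq_single i]
  · simpa using pow_eq_pow_of_natCast_eq (hx i) (b := 1) (by simp [natCast_crtExponent])
  · intro j _ hji
    simpa using pow_eq_pow_of_natCast_eq (hx j) (b := 0) (by simp [natCast_crtExponent, hji])
  · simp

theorem pow_sum_crtExponent {M : Type*} [Monoid M] {x : M} (hx : x ^ ∏ j, lam j = 1) :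
    x ^ ∑ i, crtExponent lam hcop i = x := by
  simpa using pow_eq_pow_of_natCast_eq hx (natCast_sum_crtExponent lam hcop)

theorem pow_crtExponent_pow_self {M : Type*} [Monoid M] {x : M} (hx : x ^ ∏ j, lam j = 1)
    (i : ι) : (x ^ crtExponent lam hcop i) ^ lam i = 1 := by
  simpa [← pow_mul] using pow_eq_pow_of_natCast_eq hx (natCast_crtExponent_mul_self lam hcop i)

end CRT

section Merge

variable (R : Type*) [CommRing R] {ι : Type*} [Fintype ι] (lam : ι → ℕ)

noncomputable def mergeInvHom :
    R[X] ⧸ Ideal.span {(X : R[X]) ^ (∏ i, lam i) - 1} →ₐ[R]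
      MvPolynomial ι R ⧸
        Ideal.span (Set.range fun i => MvPolynomial.X i ^ lam i - (1 : MvPolynomial ι R)) :=
  Ideal.Quotient.liftₐ _ (aeval (∏ i, Ideal.Quotient.mk _ (MvPolynomial.X i))) fun a ha => by
    refine RingHom.mem_ker.1 (Ideal.span_le.2 (Set.singleton_subset_iff.2 ?_) ha)
    rw [SetLike.mem_coe, RingHom.mem_ker, map_sub, map_pow, map_one, aeval_X, ← Finset.prod_pow,
      Finset.prod_eq_one fun i _ => ?_, sub_self]
    exact orderOf_dvd_iff_pow_eq_one.1 <| (orderOf_dvd_iff_pow_eq_one.2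
      (Ideal.Quotient.mk_pow_eq_one (Ideal.subset_span (Set.mem_range_self i)))).trans
        (Finset.dvd_prod_of_mem lam (Finset.mem_univ i))

@[simp]
theorem mergeInvHom_mk_X :
    mergeInvHom R lam (Ideal.Quotient.mk _ X) = ∏ i, Ideal.Quotient.mk _ (MvPolynomial.X i) :=
  aeval_X _

variable [DecidableEq ι] (hcop : Pairwise (Nat.Coprime on lam)) [NeZero (∏ i, lam i)]

noncomputable def mergeHom :
    MvPolynomial ι R ⧸
        Ideal.span (Set.range fun i => MvPolynomial.X i ^ lam i - (1 : MvPolynomial ι R)) →ₐ[R]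
      R[X] ⧸ Ideal.span {(X : R[X]) ^ (∏ i, lam i) - 1} :=
  Ideal.Quotient.liftₐ _
    (MvPolynomial.aeval fun i => Ideal.Quotient.mk _ X ^ crtExponent lam hcop i) fun a ha => by
      refine RingHom.mem_ker.1 (Ideal.span_le.2 (Set.range_subset_iff.2 fun i => ?_) ha)
      rw [SetLike.mem_coe, RingHom.mem_ker, map_sub, map_pow, map_one, MvPolynomial.aeval_X,
        pow_crtExponent_pow_self lam hcop
          (Ideal.Quotient.mk_pow_eq_one (Ideal.subset_span (Set.mem_singleton _))), sub_self]

@[simp]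
theorem mergeHom_mk_X (i : ι) :
    mergeHom R lam hcop (Ideal.Quotient.mk _ (MvPolynomial.X i)) =
      Ideal.Quotient.mk _ X ^ crtExponent lam hcop i :=
  MvPolynomial.aeval_X _ i

noncomputable def mergeEquiv :
    (MvPolynomial ι R ⧸
        Ideal.span (Set.range fun i => MvPolynomial.X i ^ lam i - (1 : MvPolynomial ι R))) ≃ₐ[R]
      R[X] ⧸ Ideal.span {(X : R[X]) ^ (∏ i, lam i) - 1} :=
  AlgEquiv.ofAlgHom (mergeHom R lam hcop) (mergeInvHom R lam)
    (Ideal.Quotient.algHom_ext R <| Polynomial.algHom_ext <| by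
      simp [Finset.prod_pow_eq_pow_sum, pow_sum_crtExponent lam hcop
        (Ideal.Quotient.mk_pow_eq_one (Ideal.subset_span (Set.mem_singleton _)))])
    (Ideal.Quotient.algHom_ext R <| MvPolynomial.algHom_ext fun i => by
      simp [prod_pow_crtExponent lam hcop
        fun j => Ideal.Quotient.mk_pow_eq_one (Ideal.subset_span (Set.mem_range_self j))])

theorem mergeEquiv_mk_X (i : ι) :
    mergeEquiv R lam hcop (Ideal.Quotient.mk _ (MvPolynomial.X i)) =
      Ideal.Quotient.mk _ X ^ crtExponent lam hcop i :=
  mergeHom_mk_X R lam hcop i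

theorem mergeEquiv_mk_C (a : R) :
    mergeEquiv R lam hcop (Ideal.Quotient.mk _ (MvPolynomial.C a)) =
      Ideal.Quotient.mk _ (C a) := by
  rw [← MvPolynomial.algebraMap_eq, ← Polynomial.algebraMap_eq, Ideal.Quotient.mk_algebraMap,
    Ideal.Quotient.mk_algebraMap, AlgEquiv.commutes]

theorem mergeEquiv_intertwines {σ : R ≃+* R} {α : ι → R} (hα : ∀ i, α i ^ lam i = 1)
    (σE : MvPolynomial ι R ⧸
        Ideal.span (Set.range fun i => MvPolynomial.X i ^ lam i - (1 : MvPolynomial ι R)) ≃+*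
      MvPolynomial ι R ⧸
        Ideal.span (Set.range fun i => MvPolynomial.X i ^ lam i - (1 : MvPolynomial ι R)))
    (hEC : ∀ a : R, σE (Ideal.Quotient.mk _ (MvPolynomial.C a)) =
      Ideal.Quotient.mk _ (MvPolynomial.C (σ a)))
    (hEX : ∀ i, σE (Ideal.Quotient.mk _ (MvPolynomial.X i)) =
      Ideal.Quotient.mk _ (MvPolynomial.C (α i) * MvPolynomial.X i))
    (σt : R[X] ⧸ Ideal.span {(X : R[X]) ^ (∏ i, lam i) - 1} ≃+*
      R[X] ⧸ Ideal.span {(X : R[X]) ^ (∏ i, lam i) - 1})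
    (htC : ∀ a : R, σt (Ideal.Quotient.mk _ (C a)) = Ideal.Quotient.mk _ (C (σ a)))
    (htX : σt (Ideal.Quotient.mk _ X) = Ideal.Quotient.mk _ (C (∏ i, α i) * X)) (x) :
    mergeEquiv R lam hcop (σE x) = σt (mergeEquiv R lam hcop x) := by
  have : (mergeEquiv R lam hcop).toRingEquiv.toRingHom.comp σE.toRingHom =
      σt.toRingHom.comp (mergeEquiv R lam hcop).toRingEquiv.toRingHom := by
    refine Ideal.Quotient.ringHom_ext (MvPolynomial.ringHom_ext (fun a => ?_) (fun i => ?_))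
    · simp [hEC, htC, mergeEquiv_mk_C]
    · simp only [RingHom.comp_apply, RingEquiv.toRingHom_eq_coe, RingEquiv.coe_toRingHom,
        AlgEquiv.coe_ringEquiv]
      rw [hEX, map_mul, map_mul, mergeEquiv_mk_C, mergeEquiv_mk_X, map_pow, htX, map_mul, mul_pow,
        ← map_pow (Ideal.Quotient.mk _) (C _), ← C_pow, prod_pow_crtExponent lam hcop hα]
  exact RingHom.congr_fun this x

end Merge

def ConstantStable {R : Type*} [Semiring R] (σ : R ≃+* R) : Prop :=
  ∀ k : ℕ, 1 ≤ k → ∀ c : R, (⇑σ)^[k] c = c → σ c = c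

theorem iterate_map_mul_pow_eq {R : Type*} [CommSemiring R] {σ : R ≃+* R} {b c : R}
    (hb : σ b = b) (hc : σ c * b = c) (k : ℕ) : (⇑σ)^[k] c * b ^ k = c := by
  induction k with
  | zero => simp
  | succ k ih =>
    rw [Function.iterate_succ_apply', pow_succ, ← mul_assoc, ← hb, ← map_pow, ← map_mul, ih, hb,
      hc]

theorem ConstantStable.map_eq_self_of_map_mul_eq {R : Type*} [CommSemiring R] {σ : R ≃+* R}
    (hσ : ConstantStable σ) {b c : R} {n : ℕ} (hn : 0 < n) (hb : σ b = b) (hbn : b ^ n = 1)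
    (hc : σ c * b = c) : σ c = c :=
  hσ n hn c (by simpa [hbn] using iterate_map_mul_pow_eq hb hc n)

theorem mk_map_comp_C_mul_X {R S : Type*} [CommRing R] {J : Ideal R[X]}
    [FunLike S (R[X] ⧸ J) (R[X] ⧸ J)] [RingHomClass S (R[X] ⧸ J) (R[X] ⧸ J)] (σ : R →+* R)
    (a : R) (φ : S)
    (hφC : ∀ b : R, φ (Ideal.Quotient.mk J (C b)) = Ideal.Quotient.mk J (C (σ b)))
    (hφX : φ (Ideal.Quotient.mk J X) = Ideal.Quotient.mk J (C a * X)) (p : R[X]) :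
    φ (Ideal.Quotient.mk J p) = Ideal.Quotient.mk J ((p.map σ).comp (C a * X)) := by
  have : (φ : R[X] ⧸ J →+* R[X] ⧸ J).comp (Ideal.Quotient.mk J) =
      (Ideal.Quotient.mk J).comp ((compRingHom (C a * X)).comp (mapRingHom σ)) := by
    ext b <;> simp [hφC, hφX]
  exact RingHom.congr_fun this p

theorem eq_C_of_map_comp_C_mul_X_eq_self {F : Type*} [Field F] {σ : F ≃+* F}
    (hσ : ConstantStable σ) {A : F} (hσA : σ A = A) {L : ℕ} (hA : IsPrimitiveRoot A L)
    {p : F[X]} (hp : p.degree < L) (hfix : (p.map (σ : F →+* F)).comp (C A * X) = p) :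
    σ (p.coeff 0) = p.coeff 0 ∧ p = C (p.coeff 0) := by
  have hcoeff (n : ℕ) : σ (p.coeff n) * A ^ n = p.coeff n := by
    conv_rhs => rw [← hfix]
    simp
  refine ⟨by simpa using hcoeff 0, ext fun n => ?_⟩
  rcases Nat.eq_zero_or_pos n with rfl | hn
  · simp
  rw [coeff_C, if_neg hn.ne']
  by_contra hne
  have hnL : n < L := by exact_mod_cast (le_degree_of_ne_zero hne).trans_lt hp
  have hfixed := hσ.map_eq_self_of_map_mul_eq (hn.trans hnL) (by rw [map_pow, hσA])
    (by rw [← pow_mul, mul_comm, pow_mul, hA.pow_eq_one, one_pow]) (hcoeff n)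
  have hAn := hcoeff n
  rw [hfixed, mul_eq_left₀ hne] at hAn
  exact hA.pow_ne_one_of_pos_of_lt hn.ne' hnL hAn

theorem exists_eq_mk_C_of_map_eq_self {F : Type*} [Field F] {σ : F ≃+* F}
    (hσ : ConstantStable σ) {A : F} (hσA : σ A = A) {L : ℕ} (hL : 0 < L)
    (hA : IsPrimitiveRoot A L)
    (σt : F[X] ⧸ Ideal.span {X ^ L - 1} ≃+* F[X] ⧸ Ideal.span {X ^ L - 1})
    (htC : ∀ a : F, σt (Ideal.Quotient.mk _ (C a)) = Ideal.Quotient.mk _ (C (σ a)))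
    (htX : σt (Ideal.Quotient.mk _ X) = Ideal.Quotient.mk _ (C A * X)) :
    ∀ f, σt f = f → ∃ c : F, σ c = c ∧ f = Ideal.Quotient.mk _ (C c) := by
  intro f hf
  have hg : (X ^ L - 1 : F[X]).Monic := by simpa using monic_X_pow_sub_C (1 : F) hL.ne'
  have hdeg : (X ^ L - 1 : F[X]).degree = L := by simpa using degree_X_pow_sub_C hL (1 : F)
  obtain ⟨q, rfl⟩ := Ideal.Quotient.mk_surjective f
  set p := q %ₘ (X ^ L - 1)
  have hpq : Ideal.Quotient.mk (Ideal.span {X ^ L - 1}) p = Ideal.Quotient.mk _ q :=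
    Ideal.Quotient.eq.2 <| Ideal.mem_span_singleton.2
      ⟨-(q /ₘ (X ^ L - 1)), by simp only [p, modByMonic_eq_sub_mul_div]; ring⟩
  have hp : p.degree < L := hdeg ▸ degree_modByMonic_lt q hg
  set p' := (p.map (σ : F →+* F)).comp (C A * X)
  have hp' : p'.degree < L := by
    refine (degree_lt_iff_coeff_zero _ _).2 fun n hn => ?_
    simp [p', coeff_eq_zero_of_degree_lt (hp.trans_le (by exact_mod_cast hn))]
  have hdvd : X ^ L - 1 ∣ p' - p := by
    rw [← Ideal.mem_span_singleton, ← Ideal.Quotient.eq, ← mk_map_comp_C_mul_X _ _ _ htC htX, hpq,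
      hf]
  have hfix : p' = p := sub_eq_zero.1 <| eq_zero_of_dvd_of_degree_lt hdvd <|
    hdeg ▸ (degree_sub_le _ _).trans_lt (max_lt hp' hp)
  obtain ⟨hc, hpc⟩ := eq_C_of_map_comp_C_mul_X_eq_self hσ hσA hA hp hfix
  exact ⟨p.coeff 0, hc, by rw [← hpq, ← hpc]⟩

theorem stmt6_general {F : Type*} [Field F]
    (σ : F ≃+* F)
    (hCS : ∀ k : ℕ, 1 ≤ k → ∀ c : F, (⇑σ)^[k] c = c → σ c = c)
    (e : ℕ)
    (lam : Fin e → ℕ) (hlam : ∀ i, 1 < lam i)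
    (hcop : ∀ i j, i ≠ j → Nat.Coprime (lam i) (lam j))
    (α : Fin e → F) (hαconst : ∀ i, σ (α i) = α i)
    (hαpow : ∀ i, α i ^ lam i = 1)
    (hαprim : ∀ i, ∀ m : ℕ, 1 ≤ m → m < lam i → α i ^ m ≠ 1)
    (I : Ideal (MvPolynomial (Fin e) F))
    (hI : I = Ideal.span (Set.range fun i =>
        MvPolynomial.X i ^ lam i - (1 : MvPolynomial (Fin e) F)))
    (σE : (MvPolynomial (Fin e) F ⧸ I) ≃+* (MvPolynomial (Fin e) F ⧸ I))
    (hEC : ∀ a : F, σE (Ideal.Quotient.mk I (MvPolynomial.C a)) =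
        Ideal.Quotient.mk I (MvPolynomial.C (σ a)))
    (hEX : ∀ i, σE (Ideal.Quotient.mk I (MvPolynomial.X i)) =
        Ideal.Quotient.mk I (MvPolynomial.C (α i) * MvPolynomial.X i))
    (J : Ideal (Polynomial F))
    (hJ : J = Ideal.span {(Polynomial.X : Polynomial F) ^ (∏ i, lam i) - 1})
    (σt : (Polynomial F ⧸ J) ≃+* (Polynomial F ⧸ J))
    (htC : ∀ a : F, σt (Ideal.Quotient.mk J (Polynomial.C a)) =
        Ideal.Quotient.mk J (Polynomial.C (σ a)))
    (htX : σt (Ideal.Quotient.mk J Polynomial.X) =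
        Ideal.Quotient.mk J (Polynomial.C (∏ i, α i) * Polynomial.X)) :
    -- (1)
    ((∏ i, α i) ^ (∏ i, lam i) = 1 ∧
      (∀ m : ℕ, 1 ≤ m → m < ∏ i, lam i → (∏ i, α i) ^ m ≠ 1) ∧
      (∀ f : Polynomial F ⧸ J, σt f = f →
        ∃ c : F, σ c = c ∧ f = Ideal.Quotient.mk J (Polynomial.C c))) ∧
    -- (2)
    (∃ (r : Fin e → ℕ) (τ : (MvPolynomial (Fin e) F ⧸ I) ≃+* (Polynomial F ⧸ J)),
      (∀ a : F, τ (Ideal.Quotient.mk I (MvPolynomial.C a)) =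
        Ideal.Quotient.mk J (Polynomial.C a)) ∧
      (∀ i, τ (Ideal.Quotient.mk I (MvPolynomial.X i)) =
        (Ideal.Quotient.mk J Polynomial.X) ^ r i) ∧
      (∀ x, τ (σE x) = σt (τ x))) ∧
    -- (3)
    (∀ f : MvPolynomial (Fin e) F ⧸ I, σE f = f →
      ∃ c : F, σ c = c ∧ f = Ideal.Quotient.mk I (MvPolynomial.C c)) := by
  subst hI hJ
  have hcop' : Pairwise (Nat.Coprime on lam) := fun i j hij => hcop i j hij
  have hL : 0 < ∏ i, lam i := Finset.prod_pos fun i _ => zero_lt_one.trans (hlam i)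
  have : NeZero (∏ i, lam i) := ⟨hL.ne'⟩
  have hA : IsPrimitiveRoot (∏ i, α i) (∏ i, lam i) :=
    IsPrimitiveRoot.finset_prod (fun i _ => .mk_of_lt _ (zero_lt_one.trans (hlam i)) (hαpow i)
      fun m h0 hm => hαprim i m h0 hm) (hcop'.set_pairwise _)
  have hconst := exists_eq_mk_C_of_map_eq_self hCS (by simp [map_prod, hαconst]) hL hA σt htC htX
  have hτ := mergeEquiv_intertwines F lam hcop' hαpow σE hEC hEX σt htC htX
  refine ⟨⟨hA.pow_eq_one, fun m h0 hm => hA.pow_ne_one_of_pos_of_lt (by omega) hm, hconst⟩,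
    ⟨crtExponent lam hcop', (mergeEquiv F lam hcop').toRingEquiv, mergeEquiv_mk_C F lam hcop',
      mergeEquiv_mk_X F lam hcop', hτ⟩, fun f hf => ?_⟩
  obtain ⟨c, hc, hfc⟩ := hconst _ (by rw [← hτ, hf])
  exact ⟨c, hc, (mergeEquiv F lam hcop').injective (by rw [hfc, mergeEquiv_mk_C])⟩

/-- Merging several R-extensions with pairwise coprime orders into a
single R-extension: part (1) the product of the `α_i` is a primitive `λ`-th root of
unity (`λ = λ_1⋯λ_e`) and `F[t]` is an R-extension; part (2) there is a difference ring
isomorphism `τ : E → F[t]` fixing `F` with `τ(t_i) = t^{r_i}`; part (3) `E` is an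
R-extension, i.e. `const(E,σ) = const(F,σ)`. -/
theorem stmt6 {F : Type*} [Field F] [CharZero F]
    (σ : F ≃+* F)
    (hCS : ∀ k : ℕ, 1 ≤ k → ∀ c : F, (⇑σ)^[k] c = c → σ c = c)
    (e : ℕ) (he : 1 ≤ e)
    (lam : Fin e → ℕ) (hlam : ∀ i, 1 < lam i)
    (hcop : ∀ i j, i ≠ j → Nat.Coprime (lam i) (lam j))
    (α : Fin e → F) (hαconst : ∀ i, σ (α i) = α i)
    (hαpow : ∀ i, α i ^ lam i = 1)
    (hαprim : ∀ i, ∀ m : ℕ, 1 ≤ m → m < lam i → α i ^ m ≠ 1)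
    (I : Ideal (MvPolynomial (Fin e) F))
    (hI : I = Ideal.span (Set.range fun i =>
        MvPolynomial.X i ^ lam i - (1 : MvPolynomial (Fin e) F)))
    (σE : (MvPolynomial (Fin e) F ⧸ I) ≃+* (MvPolynomial (Fin e) F ⧸ I))
    (hEC : ∀ a : F, σE (Ideal.Quotient.mk I (MvPolynomial.C a)) =
        Ideal.Quotient.mk I (MvPolynomial.C (σ a)))
    (hEX : ∀ i, σE (Ideal.Quotient.mk I (MvPolynomial.X i)) =
        Ideal.Quotient.mk I (MvPolynomial.C (α i) * MvPolynomial.X i))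
    (J : Ideal (Polynomial F))
    (hJ : J = Ideal.span {(Polynomial.X : Polynomial F) ^ (∏ i, lam i) - 1})
    (σt : (Polynomial F ⧸ J) ≃+* (Polynomial F ⧸ J))
    (htC : ∀ a : F, σt (Ideal.Quotient.mk J (Polynomial.C a)) =
        Ideal.Quotient.mk J (Polynomial.C (σ a)))
    (htX : σt (Ideal.Quotient.mk J Polynomial.X) =
        Ideal.Quotient.mk J (Polynomial.C (∏ i, α i) * Polynomial.X)) :
    -- (1)
    ((∏ i, α i) ^ (∏ i, lam i) = 1 ∧
      (∀ m : ℕ, 1 ≤ m → m < ∏ i, lam i → (∏ i, α i) ^ m ≠ 1) ∧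
      (∀ f : Polynomial F ⧸ J, σt f = f →
        ∃ c : F, σ c = c ∧ f = Ideal.Quotient.mk J (Polynomial.C c))) ∧
    -- (2)
    (∃ (r : Fin e → ℕ) (τ : (MvPolynomial (Fin e) F ⧸ I) ≃+* (Polynomial F ⧸ J)),
      (∀ a : F, τ (Ideal.Quotient.mk I (MvPolynomial.C a)) =
        Ideal.Quotient.mk J (Polynomial.C a)) ∧
      (∀ i, τ (Ideal.Quotient.mk I (MvPolynomial.X i)) =
        (Ideal.Quotient.mk J Polynomial.X) ^ r i) ∧
      (∀ x, τ (σE x) = σt (τ x))) ∧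
    -- (3)
    (∀ f : MvPolynomial (Fin e) F ⧸ I, σE f = f →
      ∃ c : F, σ c = c ∧ f = Ideal.Quotient.mk I (MvPolynomial.C c)) :=
  stmt6_general σ hCS e lam hlam hcop α hαconst hαpow hαprim I hI σE hEC hEX J hJ σt htC htX
end

section
/- Let A be a nontrivial commutative ring, let A[t,t⁻¹] be the ring of Laurent polynomials over A, let a and b be units of A, and let m ∈ ℤ with m ≠ 0. Then a + b·t^m is not a unit of A[t,t⁻¹]. -/
/-!
A unit of `A[T;T⁻¹]` stays a unit under every evaluation `T ↦ x` at a unit `x` of a nontrivial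
ring. Map `A` to an algebraic closure `K` of a residue field `A ⧸ 𝔪`; there the images of `a` and
`b` are nonzero, so `-a/b` has an `m`-th root `x ∈ Kˣ`, at which `a + b·T^m` evaluates to `0`.
-/

open LaurentPolynomial

theorem IsAlgClosed.exists_units_zpow_eq {K : Type*} [Field K] [IsAlgClosed K] {c : K}
    (hc : c ≠ 0) {m : ℤ} (hm : m ≠ 0) : ∃ x : Kˣ, ((x ^ m : Kˣ) : K) = c := by
  obtain ⟨y, hy⟩ := IsAlgClosed.exists_pow_nat_eq c (Int.natAbs_pos.mpr hm)
  have hy0 : y ≠ 0 := by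
    rintro rfl
    exact hc (hy ▸ zero_pow (Int.natAbs_ne_zero.mpr hm))
  rcases Int.natAbs_eq m with hpos | hneg
  · refine ⟨Units.mk0 y hy0, ?_⟩
    rw [hpos, zpow_natCast, Units.val_pow_eq_pow_val, Units.val_mk0, hy]
  · refine ⟨(Units.mk0 y hy0)⁻¹, ?_⟩
    rw [hneg, zpow_neg, ← inv_zpow, inv_inv, zpow_natCast, Units.val_pow_eq_pow_val,
      Units.val_mk0, hy]

/-- Let `A` be a nontrivial commutative ring, `a, b` units of `A`,
and `m ∈ ℤ` with `m ≠ 0`. Then `a + b·t^m` is not a unit of the Laurent polynomial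
ring `A[t,t⁻¹]`. -/
theorem stmt10 {A : Type*} [CommRing A] [Nontrivial A]
    (a b : Aˣ) (m : ℤ) (hm : m ≠ 0) :
    ¬ IsUnit (LaurentPolynomial.C (a : A) +
        LaurentPolynomial.C (b : A) * LaurentPolynomial.T m) := by
  intro h
  obtain ⟨I, hI⟩ := Ideal.exists_maximal A
  let := Ideal.Quotient.field I
  let f : A →+* AlgebraicClosure (A ⧸ I) := (algebraMap _ _).comp (Ideal.Quotient.mk I)
  have hfa : f a ≠ 0 := (a.isUnit.map f).ne_zero
  have hfb : f b ≠ 0 := (b.isUnit.map f).ne_zero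
  obtain ⟨x, hx⟩ := IsAlgClosed.exists_units_zpow_eq (div_ne_zero (neg_ne_zero.mpr hfa) hfb) hm
  have hroot : eval₂ f x (C (a : A) + C (b : A) * T m) = 0 := by
    rw [map_add, eval₂_C, eval₂_C_mul_T, hx]
    field_simp
    ring
  exact not_isUnit_zero (hroot ▸ h.map (eval₂ f x))
end

section
/- Let (A,σ) be a difference ring whose ring of constants is a field K, and let τ : A → S(K) be a K-homomorphism. Let β ∈ A and let A[t] be the S-extension of (A,σ) with σ(t) = t + β. Let b : ℕ → K be any function representing the germ τ(β), let r ≥ 1 be a natural number and c ∈ K, and let T ∈ S(K) be the germ of the function k ↦ c + Σ_{i=r}^{k} b(i−1). Then the unique ring homomorphism τ' : A[t] → S(K) with τ'|_A = τ and τ'(t) = T satisfies τ'∘σ = S∘τ', i.e., τ' is a K-homomorphism extending τ. -/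
/-- Extending a `K`-homomorphism `τ : A → S(K)` along an S-extension
`A[t]` with `σ(t) = t + β`: if `b : ℕ → K` represents the germ `τ(β)`, `r ≥ 1`, `c ∈ K`,
and `T` is the germ of `k ↦ c + Σ_{i=r}^{k} b(i−1)`, then the unique ring homomorphism
`τ' : A[t] → S(K)` with `τ'|_A = τ` and `τ'(t) = T` commutes with the shift, i.e. it is
a `K`-homomorphism extending `τ`. -/
theorem stmt13 {A K : Type*} [CommRing A] [Algebra ℚ A] [Field K]
    (σ : A ≃+* A)
    (ι : K →+* A)
    (hιconst : ∀ c : K, σ (ι c) = ι c)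
    (hιsurj : ∀ x : A, σ x = x → ∃ c : K, x = ι c)
    (S : Filter.Germ (Filter.atTop : Filter ℕ) K ≃+*
        Filter.Germ (Filter.atTop : Filter ℕ) K)
    (hS : ∀ f : ℕ → K, S (Filter.Germ.ofFun f) = Filter.Germ.ofFun (fun n => f (n + 1)))
    (τ : A →+* Filter.Germ (Filter.atTop : Filter ℕ) K)
    (hτσ : ∀ x : A, τ (σ x) = S (τ x))
    (hτK : ∀ c : K, τ (ι c) = Filter.Germ.ofFun (fun _ => c))
    (β : A)
    (σp : Polynomial A ≃+* Polynomial A)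
    (hpC : ∀ x : A, σp (Polynomial.C x) = Polynomial.C (σ x))
    (hpX : σp Polynomial.X = Polynomial.X + Polynomial.C β)
    (b : ℕ → K)
    (hb : (Filter.Germ.ofFun b : Filter.Germ (Filter.atTop : Filter ℕ) K) = τ β)
    (r : ℕ) (hr : 1 ≤ r) (c : K)
    (τ' : Polynomial A →+* Filter.Germ (Filter.atTop : Filter ℕ) K)
    (hτ'A : ∀ x : A, τ' (Polynomial.C x) = τ x)
    (hτ'X : τ' Polynomial.X =
        Filter.Germ.ofFun (fun k => c + ∑ i ∈ Finset.Icc r k, b (i - 1))) :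
    ∀ f : Polynomial A, τ' (σp f) = S (τ' f) := by
  have key : τ'.comp σp.toRingHom = (S.toRingHom).comp τ' := by
    apply Polynomial.ringHom_ext
    · intro x
      simp [hpC, hτ'A, hτσ]
    · simp only [RingHom.coe_comp, Function.comp_apply, RingEquiv.toRingHom_eq_coe,
        RingEquiv.coe_toRingHom, hpX, map_add, hτ'X, hτ'A, ← hb, hS]
      have : (Filter.Germ.ofFun (fun k => c + ∑ i ∈ Finset.Icc r k, b (i - 1)) +
          Filter.Germ.ofFun b : Filter.Germ (Filter.atTop : Filter ℕ) K) =
          Filter.Germ.ofFun (fun k => (c + ∑ i ∈ Finset.Icc r k, b (i - 1)) + b k) := rfl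
      rw [this]
      apply Filter.Germ.coe_eq.mpr
      filter_upwards [Filter.eventually_ge_atTop r] with k hk
      rw [Finset.sum_Icc_succ_top (by omega : r ≤ k + 1)]
      simp [add_assoc]
  intro f
  have := RingHom.congr_fun key f
  simpa using this
end

section
/- Let (A,σ) be a difference ring whose ring of constants is a field K, and let τ : A → S(K) be a K-homomorphism. (a) Let β ∈ A, let A[t] be the S-extension of (A,σ) with σ(t) = t + β, and let τ', τ'' : A[t] → S(K) be K-homomorphisms with τ'|_A = τ''|_A = τ. Then there exists d ∈ K such that τ''(t) = τ'(t) + d̄, where d̄ is the germ of the constant function d. (b) Let α be a unit of A, let A[t,t⁻¹] be the P-extension of (A,σ) with σ(t) = α·t, and let τ', τ'' : A[t,t⁻¹] → S(K) be K-homomorphisms with τ'|_A = τ''|_A = τ. Then there exists d ∈ K with d ≠ 0 such that τ''(t) = d̄·τ'(t). -/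
private lemma germ_fixed {K : Type*} (f : ℕ → K)
    (h : ∀ᶠ n in Filter.atTop, f (n + 1) = f n) :
    ∃ d : K, (Filter.Germ.ofFun f : Filter.Germ Filter.atTop K)
      = Filter.Germ.ofFun (fun _ => d) := by
  obtain ⟨N, hN⟩ := Filter.eventually_atTop.mp h
  refine ⟨f N, ?_⟩
  have : ∀ n, N ≤ n → f n = f N := by
    intro n hn
    induction n, hn using Nat.le_induction with
    | base => rfl
    | succ n hn ih => rw [hN n hn, ih]
  exact Quotient.sound (Filter.eventually_atTop.mpr ⟨N, this⟩)

private lemma fixed_const {K : Type*} [Field K]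
    (S : Filter.Germ (Filter.atTop : Filter ℕ) K ≃+*
        Filter.Germ (Filter.atTop : Filter ℕ) K)
    (hS : ∀ f : ℕ → K, S (Filter.Germ.ofFun f) = Filter.Germ.ofFun (fun n => f (n + 1)))
    (g : Filter.Germ (Filter.atTop : Filter ℕ) K) (hg : S g = g) :
    ∃ d : K, g = Filter.Germ.ofFun fun _ => d := by
  induction g using Filter.Germ.inductionOn with
  | _ f =>
    apply germ_fixed
    have := (hS f).symm.trans hg
    exact Filter.Germ.coe_eq.mp this

/-- Uniqueness of `K`-homomorphic extensions: (a) any two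
`K`-homomorphisms `A[t] → S(K)` (S-extension, `σ(t) = t + β`) agreeing with `τ` on `A`
differ on `t` by a constant germ `d ∈ K`; (b) any two `K`-homomorphisms
`A[t,t⁻¹] → S(K)` (P-extension, `σ(t) = α·t`) agreeing with `τ` on `A` differ on `t` by
a nonzero constant germ `d ∈ K`. -/
theorem stmt14 {A K : Type*} [CommRing A] [Algebra ℚ A] [Field K]
    (σ : A ≃+* A)
    (ι : K →+* A)
    (hιconst : ∀ c : K, σ (ι c) = ι c)
    (hιsurj : ∀ x : A, σ x = x → ∃ c : K, x = ι c)
    (S : Filter.Germ (Filter.atTop : Filter ℕ) K ≃+*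
        Filter.Germ (Filter.atTop : Filter ℕ) K)
    (hS : ∀ f : ℕ → K, S (Filter.Germ.ofFun f) = Filter.Germ.ofFun (fun n => f (n + 1)))
    (τ : A →+* Filter.Germ (Filter.atTop : Filter ℕ) K)
    (hτσ : ∀ x : A, τ (σ x) = S (τ x))
    (hτK : ∀ c : K, τ (ι c) = Filter.Germ.ofFun (fun _ => c)) :
    -- (a) S-extensions
    ((∀ (β : A) (σp : Polynomial A ≃+* Polynomial A),
      (∀ x : A, σp (Polynomial.C x) = Polynomial.C (σ x)) →
      σp Polynomial.X = Polynomial.X + Polynomial.C β →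
      ∀ τ' τ'' : Polynomial A →+* Filter.Germ (Filter.atTop : Filter ℕ) K,
        (∀ x : A, τ' (Polynomial.C x) = τ x) →
        (∀ f, τ' (σp f) = S (τ' f)) →
        (∀ x : A, τ'' (Polynomial.C x) = τ x) →
        (∀ f, τ'' (σp f) = S (τ'' f)) →
        ∃ d : K, τ'' Polynomial.X =
          τ' Polynomial.X + Filter.Germ.ofFun (fun _ => d)) ∧
    -- (b) P-extensions
    (∀ (α : Aˣ) (σl : LaurentPolynomial A ≃+* LaurentPolynomial A),
      (∀ x : A, σl (LaurentPolynomial.C x) = LaurentPolynomial.C (σ x)) →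
      σl (LaurentPolynomial.T 1) =
        LaurentPolynomial.C (α : A) * LaurentPolynomial.T 1 →
      ∀ τ' τ'' : LaurentPolynomial A →+* Filter.Germ (Filter.atTop : Filter ℕ) K,
        (∀ x : A, τ' (LaurentPolynomial.C x) = τ x) →
        (∀ f, τ' (σl f) = S (τ' f)) →
        (∀ x : A, τ'' (LaurentPolynomial.C x) = τ x) →
        (∀ f, τ'' (σl f) = S (τ'' f)) →
        ∃ d : K, d ≠ 0 ∧ τ'' (LaurentPolynomial.T 1) =
          Filter.Germ.ofFun (fun _ => d) * τ' (LaurentPolynomial.T 1))) := by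
  constructor
  · -- (a)
    intro β σp hσpC hσpX τ' τ'' hτ'C hτ'σ hτ''C hτ''σ
    have hfix : S (τ'' Polynomial.X - τ' Polynomial.X)
        = τ'' Polynomial.X - τ' Polynomial.X := by
      rw [map_sub, ← hτ'σ, ← hτ''σ, hσpX, map_add, map_add, hτ'C, hτ''C]
      ring
    obtain ⟨d, hd⟩ := fixed_const S hS _ hfix
    exact ⟨d, by linear_combination hd⟩
  · -- (b)
    intro α σl hσlC hσlT τ' τ'' hτ'C hτ'σ hτ''C hτ''σ
    have hT : (LaurentPolynomial.T 1 : LaurentPolynomial A)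
        * LaurentPolynomial.T (-1) = 1 := by
      rw [← LaurentPolynomial.T_add]
      norm_num [LaurentPolynomial.T_zero]
    set a := τ'' (LaurentPolynomial.T 1) with ha
    set a' := τ'' (LaurentPolynomial.T (-1)) with ha'
    set b := τ' (LaurentPolynomial.T 1) with hb
    set b' := τ' (LaurentPolynomial.T (-1)) with hb'
    set c := τ (α : A) with hc
    set c' := τ ((α⁻¹ : Aˣ) : A) with hc'
    have haa' : a * a' = 1 := by rw [ha, ha', ← map_mul, hT, map_one]
    have hbb' : b * b' = 1 := by rw [hb, hb', ← map_mul, hT, map_one]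
    have hcc' : c * c' = 1 := by
      have h1 : (α : A) * ((α⁻¹ : Aˣ) : A) = 1 := by simp
      rw [hc, hc', ← map_mul, h1, map_one]
    have hSa : S a = c * a := by rw [ha, ← hτ''σ, hσlT, map_mul, hτ''C]
    have hSb : S b = c * b := by rw [hb, ← hτ'σ, hσlT, map_mul, hτ'C]
    have hSbb' : S b * S b' = 1 := by rw [← map_mul, hbb', map_one]
    have hSb' : S b' = c' * b' := by
      have h2 : S b * (c' * b') = 1 := by
        rw [hSb, show c * b * (c' * b') = (c * c') * (b * b') by ring,
          hcc', hbb', one_mul]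
      calc S b' = S b' * (S b * (c' * b')) := by rw [h2, mul_one]
        _ = (S b' * S b) * (c' * b') := by ring
        _ = c' * b' := by rw [mul_comm (S b') (S b), hSbb', one_mul]
    have hfix : S (a * b') = a * b' := by
      rw [map_mul, hSa, hSb']
      calc c * a * (c' * b') = (c * c') * (a * b') := by ring
        _ = a * b' := by rw [hcc', one_mul]
    obtain ⟨d, hd⟩ := fixed_const S hS _ hfix
    refine ⟨d, ?_, ?_⟩
    · rintro rfl
      have hz : (Filter.Germ.ofFun (fun _ => (0 : K))
          : Filter.Germ (Filter.atTop : Filter ℕ) K) = 0 := rfl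
      rw [hz] at hd
      have : (1 : Filter.Germ (Filter.atTop : Filter ℕ) K) = 0 := by
        calc (1 : Filter.Germ (Filter.atTop : Filter ℕ) K)
            = (a * a') * (b * b') := by rw [haa', hbb', one_mul]
          _ = (a * b') * (a' * b) := by ring
          _ = 0 := by rw [hd, zero_mul]
      exact one_ne_zero this
    · calc a = (a * b') * b := by
            rw [mul_assoc, mul_comm b' b, hbb', mul_one]
        _ = Filter.Germ.ofFun (fun _ => d) * b := by rw [hd]
end

section
/- Let (A,σ) be a difference ring such that A is an integral domain and K := const(A,σ) is a field. If there exists a K-embedding τ : A → S(K), then (A,σ) is constant-stable, i.e., const(A,σ^k) = const(A,σ) for every integer k ≥ 1. -/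
/-!
If `σ^k x = x`, then the sequence representing `τ x` is eventually `k`-periodic, so it takes
only the `k` values `c_j = f (N + j)` from some index `N` on. Hence
`τ (∏ j, (x - c_j)) = ∏ j, (τ x - c_j)` vanishes as a germ; injectivity of `τ` and the absence of
zero divisors in `A` give `x = c_j` for some `j`, and `c_j ∈ K` is a constant.
-/

open Filter Finset

theorem Function.eq_add_mod_of_periodic_from {β : Type*} {f : ℕ → β} {N k : ℕ}
    (hper : ∀ n ≥ N, f (n + k) = f n) (m : ℕ) : f (N + m) = f (N + m % k) := by
  have shift : ∀ r q, f (N + r + k * q) = f (N + r) := by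
    intro r q
    induction q with
    | zero => simp
    | succ q ih => rw [mul_add, mul_one, ← add_assoc, hper _ (by omega), ih]
  conv_lhs => rw [← Nat.mod_add_div m k, ← add_assoc]
  exact shift _ _

namespace Filter.Germ

theorem iterate_shift_coe {R : Type*} (S : Germ (atTop : Filter ℕ) R → Germ atTop R)
    (hS : ∀ f : ℕ → R, S (ofFun f) = ofFun (fun n => f (n + 1))) (m : ℕ) (f : ℕ → R) :
    S^[m] (ofFun f) = ofFun (fun n => f (n + m)) := by
  induction m with
  | zero => rfl
  | succ m ih =>
    rw [Function.iterate_succ_apply', ih, hS]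
    simp only [add_assoc, add_comm 1 m]

theorem prod_coe_sub_const_eq_zero_of_periodic_from {R : Type*} [CommRing R] {f : ℕ → R}
    {N k : ℕ} (hk : 0 < k) (hper : ∀ n ≥ N, f (n + k) = f n) :
    ∏ j ∈ range k, ((ofFun f : Germ (atTop : Filter ℕ) R) - const (f (N + j))) = 0 := by
  have hcoe : ∏ j ∈ range k, ((ofFun f : Germ (atTop : Filter ℕ) R) - const (f (N + j))) =
      coeRingHom atTop (∏ j ∈ range k, (f - fun _ => f (N + j))) := by
    simp only [map_prod, map_sub]
    rfl
  rw [hcoe, ← (coeRingHom atTop).map_zero]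
  refine coe_eq.mpr (eventually_atTop.mpr ⟨N, fun n hn => ?_⟩)
  obtain ⟨m, rfl⟩ := Nat.exists_eq_add_of_le hn
  simp only [Finset.prod_apply, Pi.sub_apply, Pi.zero_apply]
  exact prod_eq_zero (mem_range.mpr (Nat.mod_lt m hk))
    (sub_eq_zero.mpr (Function.eq_add_mod_of_periodic_from hper m))

end Filter.Germ

theorem stmt16_general {A K : Type*} [CommRing A] [IsDomain A] [Field K]
    (σ : A ≃+* A)
    (ι : K →+* A)
    (hιconst : ∀ c : K, σ (ι c) = ι c)
    (S : Filter.Germ (Filter.atTop : Filter ℕ) K ≃+*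
        Filter.Germ (Filter.atTop : Filter ℕ) K)
    (hS : ∀ f : ℕ → K, S (Filter.Germ.ofFun f) = Filter.Germ.ofFun (fun n => f (n + 1)))
    (τ : A →+* Filter.Germ (Filter.atTop : Filter ℕ) K)
    (hτσ : ∀ x : A, τ (σ x) = S (τ x))
    (hτK : ∀ c : K, τ (ι c) = Filter.Germ.ofFun (fun _ => c))
    (hinj : Function.Injective τ) :
    ∀ k : ℕ, 1 ≤ k → ∀ x : A, (⇑σ)^[k] x = x → σ x = x := by
  intro k hk x hx
  obtain ⟨f, hf⟩ : ∃ f : ℕ → K, Filter.Germ.ofFun f = τ x := Quot.exists_rep (τ x)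
  have hsemiconj : Function.Semiconj τ σ S := hτσ
  have hper : ∀ᶠ n in atTop, f (n + k) = f n := by
    refine Filter.Germ.coe_eq.mp ?_
    rw [← Filter.Germ.iterate_shift_coe S hS, hf, ← hsemiconj.iterate_right k x, hx]
  obtain ⟨N, hN⟩ := eventually_atTop.mp hper
  have hroot : τ (∏ j ∈ range k, (x - ι (f (N + j)))) = 0 := by
    simp only [map_prod, map_sub, hτK, ← hf]
    exact Filter.Germ.prod_coe_sub_const_eq_zero_of_periodic_from hk hN
  obtain ⟨j, -, hj⟩ := prod_eq_zero_iff.mp (hinj (hroot.trans (map_zero τ).symm))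
  rw [sub_eq_zero.mp hj, hιconst]

/-- Let `(A,σ)` be a difference ring such that `A` is an integral
domain and `K = const(A,σ)` is a field. If there exists a `K`-embedding
`τ : A → S(K)` then `(A,σ)` is constant-stable. -/
theorem stmt16 {A K : Type*} [CommRing A] [IsDomain A] [Algebra ℚ A] [Field K]
    (σ : A ≃+* A)
    (ι : K →+* A)
    (hιconst : ∀ c : K, σ (ι c) = ι c)
    (hιsurj : ∀ x : A, σ x = x → ∃ c : K, x = ι c)
    (S : Filter.Germ (Filter.atTop : Filter ℕ) K ≃+*
        Filter.Germ (Filter.atTop : Filter ℕ) K)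
    (hS : ∀ f : ℕ → K, S (Filter.Germ.ofFun f) = Filter.Germ.ofFun (fun n => f (n + 1)))
    (τ : A →+* Filter.Germ (Filter.atTop : Filter ℕ) K)
    (hτσ : ∀ x : A, τ (σ x) = S (τ x))
    (hτK : ∀ c : K, τ (ι c) = Filter.Germ.ofFun (fun _ => c))
    (hinj : Function.Injective τ) :
    ∀ k : ℕ, 1 ≤ k → ∀ x : A, (⇑σ)^[k] x = x → σ x = x :=
  stmt16_general σ ι hιconst S hS τ hτσ hτK hinj
end

section
/- Let (A,σ) be a difference ring whose ring of constants K := const(A,σ) is a field. Let e ≥ 1, let β_1,…,β_e ∈ A, and let E := A[t_1,…,t_e] be the polynomial ring in e variables over A, equipped with the unique ring automorphism extending σ (acting on coefficients) such that σ(t_i) = t_i + β_i for all i. Assume const(E,σ) = const(A,σ), i.e., every f ∈ E with σ(f) = f is a constant polynomial with coefficient in K. Then every g ∈ E with σ(g) − g ∈ A can be written as g = c_1·t_1 + ⋯ + c_e·t_e + w with c_1,…,c_e ∈ K and w ∈ A. -/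
/-! Since `σ` moves each `t_i` only by a constant, it commutes with every partial derivative
`∂/∂t_i`. Hence `σ g - g ∈ A` makes each `∂g/∂t_i` a `σ`-constant of `E`, i.e. some `c_i ∈ K`.
Then `g - ∑ c_i t_i` has all partial derivatives zero, and in characteristic zero
(`A` is a `ℚ`-algebra) this forces it to be a constant `w ∈ A`. -/

open MvPolynomial

namespace MvPolynomial

variable {ι R : Type*} [CommSemiring R]

theorem eq_C_constantCoeff_of_pderiv_eq_zero [IsAddTorsionFree R] {f : MvPolynomial ι R}
    (hf : ∀ i, pderiv i f = 0) : f = C (constantCoeff f) := by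
  classical
  ext m
  rw [coeff_C]
  split_ifs with hm
  · rw [← hm]; rfl
  obtain ⟨i, hi⟩ : ∃ i, m i ≠ 0 := by
    by_contra! h
    exact hm (Finsupp.ext fun j => (h j).symm)
  have hm' : m - Finsupp.single i 1 + Finsupp.single i 1 = m :=
    tsub_add_cancel_of_le (Finsupp.single_le_iff.mpr (Nat.one_le_iff_ne_zero.mpr hi))
  have hcoeff := coeff_pderiv (i := i) f (m - Finsupp.single i 1)
  rw [hf i, coeff_zero, hm', ← Nat.cast_succ, ← nsmul_eq_mul'] at hcoeff
  exact (smul_eq_zero_iff_right (Nat.succ_ne_zero _)).mp hcoeff.symm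

theorem pderiv_sum_C_mul_X [Fintype ι] [DecidableEq ι] (c : ι → R) (i : ι) :
    pderiv i (∑ j, C (c j) * X j) = C (c i) := by
  simp [pderiv_X, Pi.single_apply]

theorem pderiv_comm_of_map_X_eq_X_add_C {F : Type*}
    [FunLike F (MvPolynomial ι R) (MvPolynomial ι R)] [RingHomClass F (MvPolynomial ι R) (MvPolynomial ι R)] {φ : F} {τ : R → R} {β : ι → R}
    (hφC : ∀ a, φ (C a) = C (τ a)) (hφX : ∀ j, φ (X j) = X j + C (β j)) (i : ι)
    (f : MvPolynomial ι R) : pderiv i (φ f) = φ (pderiv i f) := by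
  classical
  induction f using MvPolynomial.induction_on with
  | C a => rw [hφC, pderiv_C, pderiv_C, map_zero]
  | add p q hp hq => rw [map_add, map_add, map_add, hp, hq, map_add]
  | mul_X p j hp =>
    rw [map_mul, pderiv_mul, pderiv_mul, map_add, map_mul, map_mul, hp, hφX, map_add,
      pderiv_C, add_zero, pderiv_X]
    obtain rfl | hij := eq_or_ne i j
    · simp
    · simp [hij]

end MvPolynomial

theorem stmt18_general {A : Type*} [CommRing A] [Algebra ℚ A]
    (σ : A ≃+* A)
    (e : ℕ)
    (β : Fin e → A)
    (σE : MvPolynomial (Fin e) A ≃+* MvPolynomial (Fin e) A)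
    (hEC : ∀ a : A, σE (MvPolynomial.C a) = MvPolynomial.C (σ a))
    (hEX : ∀ i, σE (MvPolynomial.X i) = MvPolynomial.X i + MvPolynomial.C (β i))
    (hconst : ∀ f : MvPolynomial (Fin e) A, σE f = f →
        ∃ c : A, σ c = c ∧ f = MvPolynomial.C c) :
    ∀ g : MvPolynomial (Fin e) A, (∃ a : A, σE g - g = MvPolynomial.C a) →
      ∃ (c : Fin e → A) (w : A), (∀ i, σ (c i) = c i) ∧
        g = (∑ i, MvPolynomial.C (c i) * MvPolynomial.X i) + MvPolynomial.C w := by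
  have := IsAddTorsionFree.of_module_rat (M := A)
  rintro g ⟨a, ha⟩
  have hσg : σE g = g + C a := by rw [← ha, add_sub_cancel]
  have hfix (i : Fin e) : σE (pderiv i g) = pderiv i g := by
    rw [← pderiv_comm_of_map_X_eq_X_add_C hEC hEX, hσg, map_add, pderiv_C, add_zero]
  choose c hc hgc using fun i => hconst _ (hfix i)
  have hrest : ∀ i, pderiv i (g - ∑ j, C (c j) * X j) = 0 := fun i => by
    rw [map_sub, pderiv_sum_C_mul_X, hgc, sub_self]
  refine ⟨c, constantCoeff (g - ∑ j, C (c j) * X j), hc, ?_⟩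
  rw [← eq_C_constantCoeff_of_pderiv_eq_zero hrest, add_sub_cancel]

/-- Let `(A,σ)` be a difference ring whose ring of constants `K` is a
field, and let `E = A[t_1,…,t_e]` be a ΣΣ*-extension with `σ(t_i) = t_i + β_i`,
`β_i ∈ A` (i.e. `const(E,σ) = const(A,σ)`). Then every `g ∈ E` with `σ(g) − g ∈ A`
is of the form `g = c_1·t_1 + ⋯ + c_e·t_e + w` with `c_i ∈ K` and `w ∈ A`. -/
theorem stmt18 {A : Type*} [CommRing A] [Algebra ℚ A] [Nontrivial A]
    (σ : A ≃+* A)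
    (hK : ∀ c : A, σ c = c → c ≠ 0 → IsUnit c)
    (e : ℕ) (he : 1 ≤ e)
    (β : Fin e → A)
    (σE : MvPolynomial (Fin e) A ≃+* MvPolynomial (Fin e) A)
    (hEC : ∀ a : A, σE (MvPolynomial.C a) = MvPolynomial.C (σ a))
    (hEX : ∀ i, σE (MvPolynomial.X i) = MvPolynomial.X i + MvPolynomial.C (β i))
    (hconst : ∀ f : MvPolynomial (Fin e) A, σE f = f →
        ∃ c : A, σ c = c ∧ f = MvPolynomial.C c) :
    ∀ g : MvPolynomial (Fin e) A, (∃ a : A, σE g - g = MvPolynomial.C a) →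
      ∃ (c : Fin e → A) (w : A), (∀ i, σ (c i) = c i) ∧
        g = (∑ i, MvPolynomial.C (c i) * MvPolynomial.X i) + MvPolynomial.C w :=
  stmt18_general σ e β σE hEC hEX hconst
end
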